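/- arXiv:2412.18558 — 3 statements merged into one kernel-verified Lean document; each statement's English description precedes it below -/
import Mathlib

section
/- Let G be a connected bridgeless planar cubic (trivalent) graph embedded in the plane. Then the number of proper 4-colorings of the faces of G (colorings of faces with 4 colors such that faces sharing an edge receive different colors) equals 4 times the number of proper 3-edge-colorings of G. -/
/-!
A combinatorial map (rotation system): darts `D`, vertex rotation `σ`,
edge involution `α` (fixed-point free).  Vertices are the cycles of `σ`,
edges the cycles of `α`, and faces the cycles of `φ = σ * α`.
Planarity of a connected map is expressed by Euler's formula `V + F = E + 2`.
-/

structure CombMap where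
  D : Type
  [fin : Fintype D]
  [deq : DecidableEq D]
  σ : Equiv.Perm D
  α : Equiv.Perm D
  α_invol : ∀ d, α (α d) = d
  α_fpf : ∀ d, α d ≠ d

attribute [instance] CombMap.fin CombMap.deq

namespace CombMap

variable (M : CombMap)

/-- The face permutation. -/
def φ : Equiv.Perm M.D := M.σ * M.α

/-- Every vertex is trivalent. -/
def Cubic : Prop := (∀ d, M.σ (M.σ (M.σ d)) = d) ∧ ∀ d, M.σ d ≠ d

/-- The map is connected. -/
def Connected : Prop :=
  ∀ d e : M.D, Relation.ReflTransGen (fun x y => M.σ x = y ∨ M.α x = y) d e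

def sameCycleSetoid (f : Equiv.Perm M.D) : Setoid M.D where
  r := f.SameCycle
  iseqv := ⟨fun x => Equiv.Perm.SameCycle.refl f x, fun h => h.symm, fun h h' => h.trans h'⟩

/-- The number of cycles (orbits) of a permutation of the darts. -/
noncomputable def numCycles (f : Equiv.Perm M.D) : ℕ := Nat.card (Quotient (M.sameCycleSetoid f))

/-- A connected map is planar iff Euler's formula `V - E + F = 2` holds. -/
def Planar : Prop :=
  M.Connected ∧ M.numCycles M.σ + M.numCycles M.φ = M.numCycles M.α + 2

/-- No edge has the same face on both of its sides (for a plane graph this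
is equivalent to having no bridge). -/
def Bridgeless : Prop := ∀ d, ¬ M.φ.SameCycle d (M.α d)

/-- A proper `n`-face-coloring, encoded as a function on darts that is
constant on faces and assigns different colors to the two sides of each edge. -/
def FaceColoring (n : ℕ) (c : M.D → Fin n) : Prop :=
  (∀ d, c (M.φ d) = c d) ∧ ∀ d, c d ≠ c (M.α d)

/-- A proper `n`-edge-coloring, encoded as a function on darts that is
constant on edges and assigns different colors to distinct edges at a vertex. -/
def EdgeColoring (n : ℕ) (c : M.D → Fin n) : Prop :=
  (∀ d, c (M.α d) = c d) ∧ ∀ d, c d ≠ c (M.σ d)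

end CombMap

/-!
Identify the four colours with the Klein group `K = (ℤ/2)²`. A proper face colouring `c`
induces on each edge the sum of the colours of its two sides; this labelling is nowhere zero
and sums to zero around every vertex, and in a cubic graph such labellings are exactly the
proper edge colourings by the three nonzero elements of `K`. Conversely every such labelling
is the coboundary of a face function, which is then a proper face colouring. Over `ℤ/2` the
coboundary from face functions to vertex-balanced edge functions has the constants as kernel
(by connectivity), and the vertex-sum map on edge functions has rank `V - 1`, so Euler's
formula `V + F = E + 2` forces the coboundary to be onto. A face colouring is determined by its
edge labelling and its colour at one dart, which gives the factor `4 = #K`.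
-/

open Module Function

namespace Equiv.Perm

variable {α : Type*}

theorem SameCycle.apply_eq_of_invariant [Finite α] {X : Type*} {f : Perm α} {u : α → X}
    (hu : ∀ a, u (f a) = u a) {a b : α} (h : f.SameCycle a b) : u a = u b := by
  have pow_invariant (n : ℕ) (a : α) : u ((f ^ n) a) = u a := by
    induction n generalizing a with
    | zero => rfl
    | succ n ih => rw [pow_succ, mul_apply, ih, hu]
  obtain ⟨n, -, rfl⟩ := h.exists_pow_eq'
  exact (pow_invariant n a).symm

variable (R : Type*) [Ring R]

def invariantFunctions (f : Perm α) : Submodule R (α → R) where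
  carrier := {c | ∀ a, c (f a) = c a}
  add_mem' ha hb a := by simp [ha a, hb a]
  zero_mem' _ := rfl
  smul_mem' r c hc a := by simp [hc a]

variable {R}

theorem invariantFunctions_eq_range [Finite α] (f : Perm α) :
    f.invariantFunctions R =
      LinearMap.range (LinearMap.funLeft R R (Quotient.mk (SameCycle.setoid f))) := by
  ext c
  constructor
  · intro hc
    exact ⟨Quotient.lift c fun _ _ h => h.apply_eq_of_invariant hc, rfl⟩
  · rintro ⟨g, rfl⟩ a
    exact congrArg g (Quotient.sound ⟨-1, by simp⟩)

variable (R) in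
theorem finrank_invariantFunctions [Finite α] [StrongRankCondition R] (f : Perm α) :
    finrank R (f.invariantFunctions R) = Nat.card (Quotient (SameCycle.setoid f)) := by
  have : Fintype (Quotient (SameCycle.setoid f)) := Fintype.ofFinite _
  rw [invariantFunctions_eq_range, LinearMap.finrank_range_of_inj
    (LinearMap.funLeft_injective_of_surjective _ _ _ Quotient.mk_surjective),
    finrank_fintype_fun_eq_card, Nat.card_eq_fintype_card]

end Equiv.Perm

theorem Submodule.finrank_map_add_finrank_inf_ker {K V W : Type*} [DivisionRing K]
    [AddCommGroup V] [Module K V] [AddCommGroup W] [Module K W] [FiniteDimensional K V]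
    (f : V →ₗ[K] W) (p : Submodule K V) :
    finrank K (p.map f) + finrank K ↥(p ⊓ LinearMap.ker f) = finrank K p := by
  rw [← LinearMap.range_domRestrict, ← map_comap_subtype, finrank_map_subtype_eq,
    ← LinearMap.ker_domRestrict, LinearMap.finrank_range_add_finrank_ker]

theorem Nat.card_subtype_comp_eq_of_injective {α C C' : Type*} {ι : C → C'} (hι : Injective ι)
    {P : (α → C') → Prop} (hP : ∀ f, P f → ∀ a, f a ∈ Set.range ι) :
    Nat.card {c : α → C // P (ι ∘ c)} = Nat.card {f : α → C' // P f} := by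
  refine Nat.card_eq_of_bijective (fun c => ⟨ι ∘ c.1, c.2⟩) ⟨fun c c' h => ?_, fun f => ?_⟩
  · exact Subtype.ext (hι.comp_left (congrArg Subtype.val h))
  · choose c hc using hP f.1 f.2
    have hf : ι ∘ c = f.1 := funext hc
    exact ⟨⟨c, hf ▸ f.2⟩, Subtype.ext hf⟩

theorem klein_add_add_eq_zero_iff {x y z : ZMod 2 × ZMod 2} (hx : x ≠ 0) (hy : y ≠ 0)
    (hz : z ≠ 0) : x + y + z = 0 ↔ x ≠ y ∧ y ≠ z ∧ z ≠ x := by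
  have key : ∀ x y z : ZMod 2 × ZMod 2, x ≠ 0 ∧ y ≠ 0 ∧ z ≠ 0 →
      (x + y + z = 0 ↔ x ≠ y ∧ y ≠ z ∧ z ≠ x) := by decide
  exact key x y z ⟨hx, hy, hz⟩

namespace CombMap

open Equiv Perm Submodule LinearMap

variable {M : CombMap}

theorem phi_apply (d : M.D) : M.φ d = M.σ (M.α d) := rfl

theorem alpha_eq_iff {d d' : M.D} : M.α d = d' ↔ d = M.α d' :=
  ⟨fun h => h ▸ (M.α_invol d).symm, fun h => h ▸ M.α_invol d'⟩

theorem apply_alpha_eq_apply_sigma {X : Type*} {u : M.D → X} (hu : ∀ d, u (M.φ d) = u d)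
    (d : M.D) : u (M.α d) = u (M.σ d) := by
  rw [← hu (M.α d), phi_apply, M.α_invol]

theorem Connected.apply_eq {X : Type*} (hconn : M.Connected) {u : M.D → X}
    (hσ : ∀ d, u (M.σ d) = u d) (hα : ∀ d, u (M.α d) = u d) (x y : M.D) : u x = u y := by
  induction hconn x y with
  | refl => rfl
  | tail _ hstep ih => rcases hstep with rfl | rfl <;> simp [ih, hσ, hα]

theorem numCycles_eq_finrank (f : Perm M.D) :
    M.numCycles f = finrank (ZMod 2) (f.invariantFunctions (ZMod 2)) :=
  (f.finrank_invariantFunctions _).symm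

theorem Planar.nonempty (hplanar : M.Planar) : Nonempty M.D := by
  by_contra h
  have : IsEmpty M.D := not_nonempty_iff.mp h
  have := hplanar.2
  simp [numCycles] at this

namespace Cubic

variable (hcub : M.Cubic)
include hcub

theorem sigma_sigma_ne (d : M.D) : M.σ (M.σ d) ≠ d := fun h =>
  hcub.2 d (by simpa [h] using hcub.1 d)

theorem sameCycle_sigma_iff {x d : M.D} :
    M.σ.SameCycle x d ↔ x = d ∨ x = M.σ d ∨ x = M.σ (M.σ d) := by
  constructor
  · intro h
    have hσ3 : M.σ ^ 3 = 1 := Equiv.ext fun d => by simp [pow_succ, hcub.1]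
    obtain ⟨i, hi, rfl⟩ := h.symm.exists_pow_eq'
    have : i < 3 := hi.trans_le (orderOf_le_of_pow_eq_one (by norm_num) hσ3)
    interval_cases i <;> simp [pow_succ]
  · rintro (rfl | rfl | rfl) <;> simp [sameCycle_apply_left, SameCycle.refl]

end Cubic

section

variable (M) (R : Type*) [Semiring R]

-- For a face function `c`, `c (M.σ d) = c (M.α d)` is its value on the face across the edge of `d`.
def coboundary : (M.D → R) →ₗ[R] M.D → R :=
  LinearMap.id + funLeft R R M.σ

def vertexSum : (M.D → R) →ₗ[R] M.D → R :=
  LinearMap.id + funLeft R R M.σ + funLeft R R (M.σ ∘ M.σ)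

variable {M R}

theorem coboundary_apply (c : M.D → R) (d : M.D) :
    M.coboundary R c d = c d + c (M.σ d) := rfl

theorem vertexSum_apply (e : M.D → R) (d : M.D) :
    M.vertexSum R e d = e d + e (M.σ d) + e (M.σ (M.σ d)) := rfl

end

variable (M) in
def vertexIndicator (x : M.D) : M.D → ZMod 2 := fun d => if M.σ.SameCycle x d then 1 else 0

section CharTwo

variable {R : Type*} [CommRing R] [CharP R 2]

theorem coboundary_const (r : R) : M.coboundary R (fun _ => r) = 0 :=
  funext fun _ => CharTwo.add_self_eq_zero r

theorem Connected.apply_eq_of_coboundary_eq_zero (hconn : M.Connected) {c : M.D → R}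
    (hc : ∀ d, c (M.φ d) = c d) (h : M.coboundary R c = 0) (x y : M.D) : c x = c y := by
  have hσ (d : M.D) : c (M.σ d) = c d := (CharTwo.add_eq_zero.mp (congrFun h d)).symm
  exact hconn.apply_eq hσ (fun d => (apply_alpha_eq_apply_sigma hc d).trans (hσ d)) x y

theorem Connected.eq_of_coboundary_eq (hconn : M.Connected) {c c' : M.D → R}
    (hc : ∀ d, c (M.φ d) = c d) (hc' : ∀ d, c' (M.φ d) = c' d)
    (h : M.coboundary R c = M.coboundary R c') {d₀ : M.D} (h₀ : c d₀ = c' d₀) : c = c' := by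
  have hdiff := hconn.apply_eq_of_coboundary_eq_zero (c := c - c')
    (fun d => by simp [hc d, hc' d]) (by rw [map_sub, h, sub_self])
  funext d
  exact sub_eq_zero.mp ((hdiff d d₀).trans (sub_eq_zero.mpr h₀))

theorem map_coboundary_le (hcub : M.Cubic) :
    (M.φ.invariantFunctions R).map (M.coboundary R) ≤
      M.α.invariantFunctions R ⊓ ker (M.vertexSum R) := by
  rintro _ ⟨c, hc, rfl⟩
  refine ⟨fun d => ?_, ?_⟩
  · rw [coboundary_apply, coboundary_apply, apply_alpha_eq_apply_sigma hc, ← phi_apply, hc,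
      add_comm]
  · ext d
    rw [vertexSum_apply, coboundary_apply, coboundary_apply, coboundary_apply, hcub.1,
      Pi.zero_apply]
    linear_combination (c d + c (M.σ d) + c (M.σ (M.σ d))) * CharTwo.two_eq_zero (R := R)

end CharTwo

theorem inf_ker_coboundary_le [Nonempty M.D] (hconn : M.Connected) :
    M.φ.invariantFunctions (ZMod 2) ⊓ ker (M.coboundary (ZMod 2)) ≤ ZMod 2 ∙ 1 := by
  rintro c ⟨hc, h⟩
  refine mem_span_singleton.mpr ⟨c (Classical.arbitrary _), funext fun d => ?_⟩
  simpa using hconn.apply_eq_of_coboundary_eq_zero hc h _ d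

theorem vertexSum_single (hcub : M.Cubic) (y : M.D) :
    M.vertexSum (ZMod 2) (Pi.single y 1) = M.vertexIndicator y := by
  ext d
  have h1 := hcub.2 d
  have h2 := hcub.sigma_sigma_ne d
  have h3 := hcub.2 (M.σ d)
  simp only [vertexSum_apply, vertexIndicator, hcub.sameCycle_sigma_iff, Pi.single_apply]
  by_cases hd : d = y
  · subst hd; simp [h1, h2]
  by_cases hσd : M.σ d = y
  · subst hσd; simp [hd, h3]
  by_cases hσσd : M.σ (M.σ d) = y
  · subst hσσd; simp [hd, hσd]
  simp [hd, hσd, hσσd, Ne.symm hd, Ne.symm hσd, Ne.symm hσσd]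

theorem vertexIndicator_sigma (x : M.D) : M.vertexIndicator (M.σ x) = M.vertexIndicator x := by
  ext d
  simp [vertexIndicator, sameCycle_apply_left]

theorem vertexIndicator_mem (hcub : M.Cubic) (hconn : M.Connected) (d₀ d : M.D) :
    M.vertexIndicator d ∈
      (M.α.invariantFunctions (ZMod 2)).map (M.vertexSum (ZMod 2)) ⊔
        (ZMod 2 ∙ M.vertexIndicator d₀) := by
  induction hconn d₀ d with
  | refl => exact mem_sup_right (mem_span_singleton_self _)
  | @tail b _ _ hstep ih =>
    rcases hstep with rfl | rfl
    · rwa [vertexIndicator_sigma]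
    · set e : M.D → ZMod 2 := Pi.single b 1 + Pi.single (M.α b) 1
      have he : e ∈ M.α.invariantFunctions (ZMod 2) := fun d => by
        simp only [e, Pi.add_apply, Pi.single_apply, alpha_eq_iff, M.α_invol]
        exact add_comm _ _
      have hψe : M.vertexSum (ZMod 2) e = M.vertexIndicator b + M.vertexIndicator (M.α b) := by
        rw [map_add, vertexSum_single hcub, vertexSum_single hcub]
      rw [eq_sub_of_add_eq' hψe.symm]
      exact sub_mem (mem_sup_left (mem_map_of_mem he)) ih

theorem sum_smul_vertexIndicator (hcub : M.Cubic) {g : M.D → ZMod 2}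
    (hg : g ∈ M.σ.invariantFunctions (ZMod 2)) : ∑ d, g d • M.vertexIndicator d = g := by
  ext x
  have hcycle : Finset.univ.filter (M.σ.SameCycle · x) = {x, M.σ x, M.σ (M.σ x)} := by
    ext d
    simp [hcub.sameCycle_sigma_iff]
  have h1 := hcub.2 x
  have h2 := hcub.sigma_sigma_ne x
  have h3 := hcub.2 (M.σ x)
  simp only [Finset.sum_apply, Pi.smul_apply, smul_eq_mul, vertexIndicator, mul_ite, mul_one,
    mul_zero]
  rw [← Finset.sum_filter, hcycle, Finset.sum_insert (by simp [Ne.symm h1, Ne.symm h2]),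
    Finset.sum_insert (by simp [Ne.symm h3]), Finset.sum_singleton, hg (M.σ x), hg x]
  -- each vertex carries three darts, and `3 = 1` in `ZMod 2`
  linear_combination g x * CharTwo.two_eq_zero (R := ZMod 2)

theorem invariantFunctions_sigma_le (hcub : M.Cubic) (hconn : M.Connected) (d₀ : M.D) :
    M.σ.invariantFunctions (ZMod 2) ≤
      (M.α.invariantFunctions (ZMod 2)).map (M.vertexSum (ZMod 2)) ⊔
        (ZMod 2 ∙ M.vertexIndicator d₀) := by
  intro g hg
  rw [← sum_smul_vertexIndicator hcub hg]
  exact sum_mem fun d _ => smul_mem _ _ (vertexIndicator_mem hcub hconn d₀ d)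

theorem map_coboundary_eq (hcub : M.Cubic) (hplanar : M.Planar) :
    (M.φ.invariantFunctions (ZMod 2)).map (M.coboundary (ZMod 2)) =
      M.α.invariantFunctions (ZMod 2) ⊓ ker (M.vertexSum (ZMod 2)) := by
  have := hplanar.nonempty
  obtain ⟨hconn, heuler⟩ := hplanar
  refine eq_of_le_of_finrank_le (map_coboundary_le hcub) ?_
  let d₀ : M.D := Classical.arbitrary _
  have hspan (v : M.D → ZMod 2) : finrank (ZMod 2) (ZMod 2 ∙ v) ≤ 1 :=
    (finrank_span_le_card _).trans (by simp)
  have hE := finrank_map_add_finrank_inf_ker (M.vertexSum (ZMod 2)) (M.α.invariantFunctions _)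
  have hF := finrank_map_add_finrank_inf_ker (M.coboundary (ZMod 2)) (M.φ.invariantFunctions _)
  have hker := finrank_mono (inf_ker_coboundary_le hconn)
  have hV := finrank_mono (invariantFunctions_sigma_le hcub hconn d₀)
  have hsup := finrank_add_le_finrank_add_finrank
    ((M.α.invariantFunctions (ZMod 2)).map (M.vertexSum (ZMod 2))) (ZMod 2 ∙ M.vertexIndicator d₀)
  rw [numCycles_eq_finrank, numCycles_eq_finrank, numCycles_eq_finrank] at heuler
  have := hspan 1
  have := hspan (M.vertexIndicator d₀)
  omega

theorem exists_coboundary_eq_klein (hcub : M.Cubic) (hplanar : M.Planar)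
    {e : M.D → ZMod 2 × ZMod 2} (hα : ∀ d, e (M.α d) = e d) (hψ : M.vertexSum _ e = 0) :
    ∃ c, (∀ d, c (M.φ d) = c d) ∧ M.coboundary _ c = e := by
  have lift (π : ZMod 2 × ZMod 2 →+ ZMod 2) :
      ∃ c ∈ M.φ.invariantFunctions (ZMod 2), M.coboundary _ c = π ∘ e := by
    rw [← Submodule.mem_map, map_coboundary_eq hcub hplanar]
    refine ⟨fun d => congrArg π (hα d), funext fun d => ?_⟩
    simpa [vertexSum_apply] using congrArg π (congrFun hψ d)
  obtain ⟨c₁, hc₁, he₁⟩ := lift (AddMonoidHom.fst _ _)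
  obtain ⟨c₂, hc₂, he₂⟩ := lift (AddMonoidHom.snd _ _)
  exact ⟨fun d => (c₁ d, c₂ d), fun d => Prod.ext (hc₁ d) (hc₂ d),
    funext fun d => Prod.ext (congrFun he₁ d) (congrFun he₂ d)⟩

variable (M)

def IsFaceColoring {C : Type*} (c : M.D → C) : Prop :=
  (∀ d, c (M.φ d) = c d) ∧ ∀ d, c d ≠ c (M.α d)

def IsNowhereZeroKleinFlow (e : M.D → ZMod 2 × ZMod 2) : Prop :=
  (∀ d, e (M.α d) = e d) ∧ (∀ d, e d ≠ 0) ∧ M.vertexSum (ZMod 2 × ZMod 2) e = 0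

variable {M}

theorem isFaceColoring_comp_iff {C C' : Type*} {ι : C → C'} (hι : Injective ι) {c : M.D → C} :
    M.IsFaceColoring (ι ∘ c) ↔ M.IsFaceColoring c := by
  simp only [IsFaceColoring, comp_apply, hι.eq_iff, hι.ne_iff]

theorem card_faceColoring_eq {n : ℕ} {C : Type*} (e : Fin n ≃ C) :
    Nat.card {c : M.D → Fin n // M.FaceColoring n c} =
      Nat.card {c : M.D → C // M.IsFaceColoring c} := by
  rw [← Nat.card_subtype_comp_eq_of_injective e.injective fun _ _ _ => e.surjective _]
  exact Nat.card_congr (Equiv.subtypeEquivRight fun _ => (isFaceColoring_comp_iff e.injective).symm)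

theorem Cubic.edgeColoring_iff (hcub : M.Cubic) {ι : Fin 3 → ZMod 2 × ZMod 2} (hι : Injective ι)
    (h0 : ∀ i, ι i ≠ 0) {c : M.D → Fin 3} :
    M.EdgeColoring 3 c ↔ M.IsNowhereZeroKleinFlow (ι ∘ c) := by
  constructor
  · rintro ⟨hα, hσ⟩
    refine ⟨fun d => congrArg ι (hα d), fun d => h0 _, funext fun d => ?_⟩
    have hσσ : c (M.σ (M.σ d)) ≠ c d := by simpa [hcub.1] using hσ (M.σ (M.σ d))
    exact (klein_add_add_eq_zero_iff (h0 _) (h0 _) (h0 _)).mpr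
      ⟨hι.ne (hσ d), hι.ne (hσ _), hι.ne hσσ⟩
  · rintro ⟨hα, -, hsum⟩
    exact ⟨fun d => hι (hα d), fun d h =>
      ((klein_add_add_eq_zero_iff (h0 _) (h0 _) (h0 _)).mp (congrFun hsum d)).1 (congrArg ι h)⟩

theorem Cubic.card_edgeColoring_eq (hcub : M.Cubic) :
    Nat.card {c : M.D → Fin 3 // M.EdgeColoring 3 c} =
      Nat.card {e // M.IsNowhereZeroKleinFlow e} := by
  let ι : Fin 3 → ZMod 2 × ZMod 2 := ![(0, 1), (1, 0), (1, 1)]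
  have hι : Injective ι := by decide
  have h0 : ∀ i, ι i ≠ 0 := by decide
  have hrange : ∀ x, x ≠ 0 → ∃ i, ι i = x := by decide
  rw [← Nat.card_subtype_comp_eq_of_injective hι fun e he d => hrange _ (he.2.1 d)]
  exact Nat.card_congr (Equiv.subtypeEquivRight fun _ => hcub.edgeColoring_iff hι h0)

theorem IsFaceColoring.isNowhereZeroKleinFlow_coboundary (hcub : M.Cubic)
    {c : M.D → ZMod 2 × ZMod 2} (hc : M.IsFaceColoring c) :
    M.IsNowhereZeroKleinFlow (M.coboundary _ c) := by
  obtain ⟨hα, hψ⟩ := map_coboundary_le hcub ⟨c, hc.1, rfl⟩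
  refine ⟨hα, fun d h => hc.2 d ?_, hψ⟩
  rw [apply_alpha_eq_apply_sigma hc.1]
  exact CharTwo.add_eq_zero.mp h

theorem isFaceColoring_of_coboundary_ne_zero {R : Type*} [CommRing R] [CharP R 2]
    {c : M.D → R} (hc : ∀ d, c (M.φ d) = c d) (h0 : ∀ d, M.coboundary R c d ≠ 0) :
    M.IsFaceColoring c := by
  refine ⟨hc, fun d h => h0 d ?_⟩
  rw [coboundary_apply, ← apply_alpha_eq_apply_sigma hc, ← h, CharTwo.add_self_eq_zero]

theorem card_isFaceColoring_klein (hcub : M.Cubic) (hplanar : M.Planar) :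
    Nat.card {c : M.D → ZMod 2 × ZMod 2 // M.IsFaceColoring c} =
      4 * Nat.card {e // M.IsNowhereZeroKleinFlow e} := by
  obtain ⟨d₀⟩ := hplanar.nonempty
  let F (c : {c : M.D → ZMod 2 × ZMod 2 // M.IsFaceColoring c}) :
      (ZMod 2 × ZMod 2) × {e // M.IsNowhereZeroKleinFlow e} :=
    (c.1 d₀, ⟨M.coboundary _ c.1, c.2.isNowhereZeroKleinFlow_coboundary hcub⟩)
  have hinj : Injective F := fun c c' h => by
    simp only [F, Prod.mk.injEq, Subtype.mk.injEq] at h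
    exact Subtype.ext (hplanar.1.eq_of_coboundary_eq c.2.1 c'.2.1 h.2 h.1)
  have hsurj : Surjective F := by
    rintro ⟨k, e, he⟩
    obtain ⟨c, hc, rfl⟩ := exists_coboundary_eq_klein hcub hplanar he.1 he.2.2
    have hshift : M.coboundary _ (c + fun _ => k - c d₀) = M.coboundary _ c := by
      rw [map_add, coboundary_const, add_zero]
    refine ⟨⟨c + fun _ => k - c d₀, isFaceColoring_of_coboundary_ne_zero (fun d => ?_) ?_⟩, ?_⟩
    · simp [hc d]
    · rw [hshift]; exact he.2.1
    · simp [F, hshift]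
  rw [Nat.card_eq_of_bijective F ⟨hinj, hsurj⟩, Nat.card_prod]
  simp

end CombMap

theorem tait_four_face_colorings_eq_four_mul_three_edge_colorings_general
    (M : CombMap) (hcub : M.Cubic) (hplanar : M.Planar) :
    Nat.card {c : M.D → Fin 4 // M.FaceColoring 4 c} =
      4 * Nat.card {c : M.D → Fin 3 // M.EdgeColoring 3 c} := by
  rw [M.card_faceColoring_eq (Fintype.equivOfCardEq (β := ZMod 2 × ZMod 2) rfl),
    M.card_isFaceColoring_klein hcub hplanar, hcub.card_edgeColoring_eq]

/-- **Tait's theorem.**  For a connected bridgeless cubic plane graph, the number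
of proper 4-face-colorings equals 4 times the number of proper 3-edge-colorings. -/
theorem tait_four_face_colorings_eq_four_mul_three_edge_colorings
    (M : CombMap) (hcub : M.Cubic) (hplanar : M.Planar) (hbr : M.Bridgeless) :
    Nat.card {c : M.D → Fin 4 // M.FaceColoring 4 c} =
      4 * Nat.card {c : M.D → Fin 3 // M.EdgeColoring 3 c} :=
  tait_four_face_colorings_eq_four_mul_three_edge_colorings_general M hcub hplanar
end

section
/- If a cubic plane graph G contains a quadrilateral face, then G is 4-face-colorable whenever the smaller cubic plane graph obtained by deleting the quadrilateral (replacing it by a crossing-free joining of the four boundary edges) is 4-face-colorable; however, not every 4-face-coloring of the reduced graph extends directly — in general one must first modify the coloring by interchanging two colors on a maximal connected two-colored region (a Kempe switch). -/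
/-!
Let `c'` be a 4-coloring of `M'`. The face of `M` across an edge of the quadrilateral is made of
darts of faces of `M'`: of one face at the edges of `q1` and `q3`, and of the faces through `p1`
and through `p3` at the edges of `q2` and `q4`. So `c'` extends to `M`, the quadrilateral getting
a color missing among its neighbours, as soon as `c' p1 = c' p3`. If `p1` and `p3` lie in
different components of `M'`, swapping two colors on the component of `p3` achieves this.
Otherwise `p1` and `p3` lie on one face of `M'`: cutting `M` along the four edges leaving the
quadrilateral gives a map with at most two components, which by Euler's inequality has at most
two faces more than the planar `M`, whereas four faces would be created if the faces of `p1` and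
`p3` in `M'` were distinct.
-/

open Equiv Relation

namespace Setoid

variable {D : Type*}

/-- The relation obtained from `r` by merging the classes of `a` and `b`. -/
def MergeRel (r : Setoid D) (a b x y : D) : Prop :=
  r x y ∨ (r x a ∧ r b y) ∨ (r x b ∧ r a y)

theorem mergeRel_equivalence (r : Setoid D) (a b : D) : Equivalence (r.MergeRel a b) where
  refl x := Or.inl (r.refl x)
  symm := by
    rintro x y (h | ⟨h1, h2⟩ | ⟨h1, h2⟩)
    · exact Or.inl (r.symm h)
    · exact Or.inr (Or.inr ⟨r.symm h2, r.symm h1⟩)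
    · exact Or.inr (Or.inl ⟨r.symm h2, r.symm h1⟩)
  trans := by
    rintro x y z (h | ⟨h1, h2⟩ | ⟨h1, h2⟩) (h' | ⟨h1', h2'⟩ | ⟨h1', h2'⟩)
    · exact Or.inl (r.trans h h')
    · exact Or.inr (Or.inl ⟨r.trans h h1', h2'⟩)
    · exact Or.inr (Or.inr ⟨r.trans h h1', h2'⟩)
    · exact Or.inr (Or.inl ⟨h1, r.trans h2 h'⟩)
    · exact Or.inr (Or.inl ⟨h1, h2'⟩)
    · exact Or.inl (r.trans h1 h2')
    · exact Or.inr (Or.inr ⟨h1, r.trans h2 h'⟩)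
    · exact Or.inl (r.trans h1 h2')
    · exact Or.inr (Or.inr ⟨h1, h2'⟩)

theorem mergeRel_iff_of_rel {r : Setoid D} {a b x y : D} (hab : r a b) :
    r.MergeRel a b x y ↔ r x y := by
  refine ⟨?_, Or.inl⟩
  rintro (h | ⟨h1, h2⟩ | ⟨h1, h2⟩)
  · exact h
  · exact r.trans h1 (r.trans hab h2)
  · exact r.trans h1 (r.trans (r.symm hab) h2)

theorem card_quotient_eq_card_of_rel_imp_eq {r : Setoid D} (h : ∀ x y, r x y → x = y) :
    Nat.card (Quotient r) = Nat.card D :=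
  (Nat.card_eq_of_bijective _ ⟨fun x y hxy => h x y (Quotient.exact hxy),
    Quotient.mk_surjective⟩).symm

theorem card_quotient_eq_add_one [Finite D] {r s : Setoid D} {a b : D} (hrs : r ≤ s)
    (hsr : ∀ x y, s x y → r.MergeRel a b x y) (hab : s a b) (hnab : ¬ r a b) :
    Nat.card (Quotient r) = Nat.card (Quotient s) + 1 := by
  classical
  let F : Quotient r → Option (Quotient s) := Quotient.lift
    (fun x => if r x b then none else some (Quotient.mk s x)) fun x y (hxy : r x y) => by
      by_cases hxb : r x b
      · simp [hxb, r.trans (r.symm hxy) hxb]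
      · have hyb : ¬ r y b := fun hyb => hxb (r.trans hxy hyb)
        simpa [hxb, hyb] using Quotient.sound (hrs hxy)
  have hF : Function.Bijective F := by
    constructor
    · refine fun x y => Quotient.inductionOn₂ x y fun x y hxy => Quotient.sound ?_
      by_cases hxb : r x b <;> by_cases hyb : r y b <;> simp [F, hxb, hyb] at hxy
      · exact r.trans hxb (r.symm hyb)
      · rcases hsr x y (Quotient.exact hxy) with h | ⟨-, h⟩ | ⟨h, -⟩
        · exact h
        · exact absurd (r.symm h) hyb
        · exact absurd h hxb
    · intro o
      rcases o with _ | y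
      · exact ⟨Quotient.mk r b, by simp [F]⟩
      induction y using Quotient.inductionOn with | h y => ?_
      by_cases hyb : r y b
      · refine ⟨Quotient.mk r a, ?_⟩
        simpa [F, hnab] using Quotient.sound (s.trans hab (hrs (r.symm hyb)))
      · exact ⟨Quotient.mk r y, by simp [F, hyb]⟩
  rw [Nat.card_eq_of_bijective F hF, Finite.card_option]

end Setoid

namespace Equiv.Perm

variable {D : Type*}

/-- Fixed points count as cycles (unlike in `cycleType`). -/
noncomputable def numCycles (f : Perm D) : ℕ := Nat.card (Quotient (SameCycle.setoid f))

theorem sameCycle_iff_exists_pow_apply [Finite D] {f : Perm D} {x y : D} :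
    f.SameCycle x y ↔ ∃ n : ℕ, (f ^ n) x = y :=
  ⟨SameCycle.exists_nat_pow_eq, fun ⟨n, h⟩ => ⟨n, by rwa [zpow_natCast]⟩⟩

theorem pow_apply_eq_pow_apply {f g : Perm D} {x : D} {n : ℕ}
    (h : ∀ i < n, g ((f ^ i) x) = f ((f ^ i) x)) : (g ^ n) x = (f ^ n) x := by
  induction n with
  | zero => rfl
  | succ n ih =>
    rw [pow_succ', pow_succ', mul_apply, mul_apply, ih fun i hi => h i (by omega), h n (by omega)]

theorem numCycles_conj (g f : Perm D) : numCycles (g * f * g⁻¹) = numCycles f :=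
  Nat.card_congr (Quotient.congr g⁻¹ fun _ _ => sameCycle_conj)

theorem sameCycle_iff_of_involutive [Finite D] {α : Perm D} (hα : ∀ d, α (α d) = d)
    {x y : D} : α.SameCycle x y ↔ y = x ∨ y = α x := by
  refine ⟨fun h => ?_, ?_⟩
  · obtain ⟨n, rfl⟩ := sameCycle_iff_exists_pow_apply.mp h
    clear h
    induction n with
    | zero => exact Or.inl rfl
    | succ n ih =>
      rw [pow_succ', mul_apply]
      rcases ih with h | h <;> rw [h] <;> simp [hα]
  · rintro (rfl | rfl)
    · exact SameCycle.refl _ _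
    · exact sameCycle_apply_right.mpr (SameCycle.refl _ _)

theorem SameCycle.exists_apply_eq_of_semiconj {A B : Type*} [Finite B] {f : Perm A}
    {F : Perm B} {ι : A → B} (h : ∀ z, F (ι z) = ι (f z)) {x : A} {y : B}
    (hs : F.SameCycle (ι x) y) :
    ∃ w, ι w = y ∧ f.SameCycle x w := by
  obtain ⟨n, rfl⟩ := sameCycle_iff_exists_pow_apply.mp hs
  refine ⟨(f ^ n) x, ?_, sameCycle_pow_right.mpr (SameCycle.refl f x)⟩
  clear hs
  induction n with
  | zero => rfl
  | succ n ih => rw [pow_succ', mul_apply, ← h, ih, pow_succ', mul_apply]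

section Swap

variable [DecidableEq D] [Finite D]

theorem SameCycle.mergeRel_of_swap_mul {f : Perm D} {a b x y : D}
    (h : (swap a b * f).SameCycle x y) : (SameCycle.setoid f).MergeRel a b x y := by
  obtain ⟨n, rfl⟩ := sameCycle_iff_exists_pow_apply.mp h
  clear h
  induction n with
  | zero => exact Or.inl (SameCycle.refl f x)
  | succ n ih =>
    refine (Setoid.mergeRel_equivalence _ a b).trans ih ?_
    set z := ((swap a b * f) ^ n) x
    have hz : f.SameCycle z (f z) := sameCycle_apply_right.mpr (SameCycle.refl f z)
    rw [pow_succ', mul_apply, mul_apply, swap_apply_def]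
    split_ifs with ha hb
    · exact Or.inr (Or.inl ⟨ha ▸ hz, SameCycle.refl f b⟩)
    · exact Or.inr (Or.inr ⟨hb ▸ hz, SameCycle.refl f a⟩)
    · exact Or.inl hz

theorem SameCycle.of_swap_mul {f : Perm D} {a b x y : D} (hab : f.SameCycle a b)
    (h : (swap a b * f).SameCycle x y) : f.SameCycle x y :=
  (Setoid.mergeRel_iff_of_rel (r := SameCycle.setoid f) hab).mp h.mergeRel_of_swap_mul

theorem sameCycle_swap_mul_of_not_sameCycle {f : Perm D} {a b : D}
    (h : ¬ f.SameCycle a b) : (swap a b * f).SameCycle a b := by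
  classical
  have hex : ∃ m, 0 < m ∧ (f ^ m) a = a := by
    obtain ⟨m, hm, -, hma⟩ := (SameCycle.refl f a).exists_pow_eq''
    exact ⟨m, hm, hma⟩
  obtain ⟨k, hk⟩ : ∃ k, Nat.find hex = k + 1 :=
    ⟨Nat.find hex - 1, by have := (Nat.find_spec hex).1; omega⟩
  have hper : (f ^ (k + 1)) a = a := hk ▸ (Nat.find_spec hex).2
  have hagree : ((swap a b * f) ^ k) a = (f ^ k) a := by
    refine pow_apply_eq_pow_apply fun i hi => swap_apply_of_ne_of_ne ?_ ?_
    · rw [← mul_apply, ← pow_succ']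
      exact fun he => Nat.find_min hex (by omega : i + 1 < Nat.find hex) ⟨by omega, he⟩
    · rw [← mul_apply, ← pow_succ']
      exact fun he => h (he ▸ (sameCycle_pow_right.mpr (SameCycle.refl f a)))
  refine sameCycle_iff_exists_pow_apply.mpr ⟨k + 1, ?_⟩
  rw [pow_succ', mul_apply, hagree, mul_apply, ← mul_apply f, ← pow_succ', hper,
    swap_apply_left]

theorem not_sameCycle_swap_mul_of_sameCycle {f : Perm D} {a b : D} (hab : a ≠ b)
    (h : f.SameCycle a b) : ¬ (swap a b * f).SameCycle a b := by
  classical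
  have hex : ∃ m, 0 < m ∧ (f ^ m) a = b := by
    obtain ⟨m, hm, -, hmb⟩ := h.exists_pow_eq''
    exact ⟨m, hm, hmb⟩
  set m := Nat.find hex
  have hmb : (f ^ m) a = b := (Nat.find_spec hex).2
  have hmin : ∀ i, 0 < i → i < m → (f ^ i) a ≠ b :=
    fun i h0 hi he => Nat.find_min hex hi ⟨h0, he⟩
  -- the orbit of `a` under `swap a b * f` is `a, f a, …, f^(m-1) a`, which misses `b`
  have horbit : ∀ n, ∃ i < m, ((swap a b * f) ^ n) a = (f ^ i) a := by
    intro n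
    induction n with
    | zero => exact ⟨0, (Nat.find_spec hex).1, rfl⟩
    | succ n ih =>
      obtain ⟨i, hi, hn⟩ := ih
      rw [pow_succ', mul_apply, hn, mul_apply, ← mul_apply f, ← pow_succ']
      rcases Nat.lt_or_ge (i + 1) m with hlt | hge
      · refine ⟨i + 1, hlt, swap_apply_of_ne_of_ne (fun he => ?_) (hmin _ (by omega) hlt)⟩
        refine hmin (m - (i + 1)) (by omega) (by omega) ?_
        rw [← he, ← mul_apply, ← pow_add, Nat.sub_add_cancel hlt.le, hmb]
      · rw [show i + 1 = m by omega, hmb, swap_apply_right]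
        exact ⟨0, (Nat.find_spec hex).1, rfl⟩
  intro hs
  obtain ⟨n, hn⟩ := sameCycle_iff_exists_pow_apply.mp hs
  obtain ⟨i, hi, hin⟩ := horbit n
  rcases Nat.eq_zero_or_pos i with rfl | hi0
  · exact hab (by simpa [hn] using hin.symm)
  · exact hmin i hi0 hi (hin ▸ hn)

theorem numCycles_eq_numCycles_swap_mul_add_one {f : Perm D} {a b : D}
    (h : ¬ f.SameCycle a b) : numCycles f = numCycles (swap a b * f) + 1 := by
  have hmerge := sameCycle_swap_mul_of_not_sameCycle h
  refine Setoid.card_quotient_eq_add_one (a := a) (b := b) (fun x y hxy => ?_)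
    (fun x y hxy => hxy.mergeRel_of_swap_mul) hmerge h
  rw [← swap_mul_self_mul a b f] at hxy
  exact SameCycle.of_swap_mul hmerge hxy

theorem numCycles_swap_mul_of_sameCycle {f : Perm D} {a b : D} (hab : a ≠ b)
    (h : f.SameCycle a b) : numCycles (swap a b * f) = numCycles f + 1 := by
  have := numCycles_eq_numCycles_swap_mul_add_one (not_sameCycle_swap_mul_of_sameCycle hab h)
  rwa [swap_mul_self_mul] at this

theorem numCycles_swap_mul_le (f : Perm D) (a b : D) :
    numCycles (swap a b * f) ≤ numCycles f + 1 := by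
  by_cases h : f.SameCycle a b
  · rcases eq_or_ne a b with rfl | hab
    · rw [swap_self, ← one_def, one_mul]
      omega
    · exact (numCycles_swap_mul_of_sameCycle hab h).le
  · have := numCycles_eq_numCycles_swap_mul_add_one h
    omega

end Swap

section Card

variable [Fintype D]

theorem numCycles_le_card (f : Perm D) : numCycles f ≤ Fintype.card D := by
  rw [← Nat.card_eq_fintype_card]
  exact Nat.card_le_card_of_surjective _ Quotient.mk_surjective

theorem numCycles_one : numCycles (1 : Perm D) = Fintype.card D := by
  rw [numCycles, Setoid.card_quotient_eq_card_of_rel_imp_eq fun x y h => sameCycle_one.mp h,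
    Nat.card_eq_fintype_card]

theorem card_eq_two_mul_numCycles {α : Perm D} (hα : ∀ d, α (α d) = d)
    (hfix : ∀ d, α d ≠ d) :
    Fintype.card D = 2 * numCycles α := by
  classical
  have hfiber : ∀ q : Quotient (SameCycle.setoid α),
      (Finset.univ.filter fun d => Quotient.mk _ d = q).card = 2 := by
    refine Quotient.ind fun x => ?_
    have : Finset.univ.filter (fun d => Quotient.mk (SameCycle.setoid α) d = Quotient.mk _ x)
        = {x, α x} := by
      ext d
      simp only [Finset.mem_filter, Finset.mem_univ, true_and, Quotient.eq,
        Finset.mem_insert, Finset.mem_singleton]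
      change α.SameCycle d x ↔ _
      rw [sameCycle_comm, sameCycle_iff_of_involutive hα]
    rw [this, Finset.card_pair (hfix x).symm]
  rw [← Finset.card_univ, Finset.card_eq_sum_card_fiberwise
    (f := Quotient.mk (SameCycle.setoid α)) (t := Finset.univ) fun _ _ => Finset.mem_univ _]
  simp only [hfiber, Finset.sum_const, smul_eq_mul, Finset.card_univ, numCycles,
    Nat.card_eq_fintype_card]
  ring

end Card

section Transpositions

def PairRel (L : List (D × D)) (x y : D) : Prop := (x, y) ∈ L

noncomputable def numComponents (L : List (D × D)) : ℕ :=
  Nat.card (Quotient (EqvGen.setoid (PairRel L)))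

theorem eqvGen_mono_cons {L : List (D × D)} {a b x y : D} (h : EqvGen (PairRel L) x y) :
    EqvGen (PairRel ((a, b) :: L)) x y :=
  h.mono fun _ _ h => List.mem_cons_of_mem _ h

theorem eqvGen_cons_iff {L : List (D × D)} {a b x y : D} :
    EqvGen (PairRel ((a, b) :: L)) x y ↔ (EqvGen.setoid (PairRel L)).MergeRel a b x y := by
  refine ⟨fun h => (Setoid.mergeRel_equivalence _ a b).eqvGen_iff.mp (h.mono ?_), ?_⟩
  · intro u v huv
    rcases List.mem_cons.mp huv with huv | huv
    · obtain ⟨rfl, rfl⟩ := Prod.mk.inj huv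
      exact Or.inr (Or.inl ⟨EqvGen.refl _, EqvGen.refl _⟩)
    · exact Or.inl (EqvGen.rel _ _ huv)
  · have hab : EqvGen (PairRel ((a, b) :: L)) a b := EqvGen.rel _ _ List.mem_cons_self
    rintro (h | ⟨h1, h2⟩ | ⟨h1, h2⟩)
    · exact eqvGen_mono_cons h
    · exact ((eqvGen_mono_cons h1).trans _ _ _ hab).trans _ _ _ (eqvGen_mono_cons h2)
    · exact ((eqvGen_mono_cons h1).trans _ _ _ (hab.symm _ _)).trans _ _ _
        (eqvGen_mono_cons h2)

theorem numComponents_cons_of_eqvGen {L : List (D × D)} {a b : D}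
    (h : EqvGen (PairRel L) a b) : numComponents ((a, b) :: L) = numComponents L := by
  have : EqvGen.setoid (PairRel ((a, b) :: L)) = EqvGen.setoid (PairRel L) :=
    Setoid.ext fun _ _ => eqvGen_cons_iff.trans (Setoid.mergeRel_iff_of_rel h)
  rw [numComponents, numComponents, this]

theorem numComponents_eq_cons_add_one [Finite D] {L : List (D × D)} {a b : D}
    (h : ¬ EqvGen (PairRel L) a b) : numComponents L = numComponents ((a, b) :: L) + 1 :=
  Setoid.card_quotient_eq_add_one (fun _ _ => eqvGen_mono_cons) (fun _ _ => eqvGen_cons_iff.mp)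
    (EqvGen.rel _ _ List.mem_cons_self) h

theorem numComponents_nil [Fintype D] : numComponents ([] : List (D × D)) = Fintype.card D := by
  rw [numComponents, Setoid.card_quotient_eq_card_of_rel_imp_eq, Nat.card_eq_fintype_card]
  intro x y h
  induction h with
  | rel _ _ h => simp [PairRel] at h
  | refl => rfl
  | symm _ _ _ ih => exact ih.symm
  | trans _ _ _ _ _ ih ih' => exact ih.trans ih'

variable [DecidableEq D]

def swapsProd (L : List (D × D)) : Perm D := (L.map fun p => swap p.1 p.2).prod

@[simp]
theorem swapsProd_nil : swapsProd ([] : List (D × D)) = 1 := rfl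

@[simp]
theorem swapsProd_cons (a b : D) (L : List (D × D)) :
    swapsProd ((a, b) :: L) = swap a b * swapsProd L := by
  simp [swapsProd]

theorem swapsProd_append (L L' : List (D × D)) :
    swapsProd (L ++ L') = swapsProd L * swapsProd L' := by
  simp [swapsProd]

theorem eqvGen_swapsProd_apply (L : List (D × D)) (z : D) :
    EqvGen (PairRel L) z (swapsProd L z) := by
  induction L generalizing z with
  | nil => exact EqvGen.refl z
  | cons p L ih =>
    obtain ⟨a, b⟩ := p
    refine (eqvGen_mono_cons (ih z)).trans _ _ _ ?_
    rw [swapsProd_cons, mul_apply, swap_apply_def]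
    split_ifs with ha hb
    · exact ha ▸ EqvGen.rel _ _ List.mem_cons_self
    · exact hb ▸ (EqvGen.rel _ _ List.mem_cons_self).symm _ _
    · exact EqvGen.refl _

theorem eqvGen_of_sameCycle_swapsProd [Finite D] {L : List (D × D)} {x y : D}
    (h : (swapsProd L).SameCycle x y) : EqvGen (PairRel L) x y := by
  obtain ⟨n, rfl⟩ := sameCycle_iff_exists_pow_apply.mp h
  clear h
  induction n with
  | zero => exact EqvGen.refl x
  | succ n ih =>
    rw [pow_succ', mul_apply]
    exact ih.trans _ _ _ (eqvGen_swapsProd_apply L _)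

variable [Fintype D]

theorem exists_swapsProd_eq (f : Perm D) :
    ∃ L : List (D × D), swapsProd L = f ∧ L.length + numCycles f ≤ Fintype.card D := by
  induction hk : Fintype.card D - numCycles f using Nat.strong_induction_on generalizing f with
  | _ k ih =>
  by_cases hf : f = 1
  · subst hf
    exact ⟨[], rfl, by simp [numCycles_one]⟩
  obtain ⟨a, ha⟩ : ∃ a, f a ≠ a := not_forall.mp fun h => hf (Equiv.ext h)
  have hsplit := numCycles_swap_mul_of_sameCycle (Ne.symm ha)
    (sameCycle_apply_right.mpr (SameCycle.refl f a))
  have hle := numCycles_le_card (swap a (f a) * f)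
  obtain ⟨L, hL, hlen⟩ := ih _ (by omega) (swap a (f a) * f) rfl
  refine ⟨(a, f a) :: L, by rw [swapsProd_cons, hL, swap_mul_self_mul], ?_⟩
  rw [List.length_cons]
  omega

/-- Each transposition changes the number of cycles by one, and lowers it only when it joins
two components of `PairRel L`. -/
theorem numCycles_swapsProd_add_card_le (L : List (D × D)) :
    numCycles (swapsProd L) + Fintype.card D ≤ L.length + 2 * numComponents L := by
  induction L with
  | nil =>
    simp only [swapsProd_nil, numCycles_one, numComponents_nil, List.length_nil]
    omega
  | cons p L ih =>
    obtain ⟨a, b⟩ := p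
    rw [swapsProd_cons, List.length_cons]
    by_cases h : EqvGen (PairRel L) a b
    · have := numCycles_swap_mul_le (swapsProd L) a b
      rw [numComponents_cons_of_eqvGen h]
      omega
    · have hmerge := numCycles_eq_numCycles_swap_mul_add_one
        fun h' => h (eqvGen_of_sameCycle_swapsProd h')
      have := numComponents_eq_cons_add_one h
      omega

/-- Euler's inequality (the genus is nonnegative) for at most `#R` orbits of `⟨σ, α⟩`. -/
theorem numCycles_add_numCycles_add_numCycles_mul_le (σ α : Perm D) (R : Finset D)
    (hR : ∀ d, ∃ r ∈ R, ReflTransGen (fun x y => σ x = y ∨ α x = y) d r) :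
    numCycles σ + numCycles α + numCycles (σ * α) ≤ Fintype.card D + 2 * R.card := by
  obtain ⟨Lσ, rfl, hσ⟩ := exists_swapsProd_eq σ
  obtain ⟨Lα, rfl, hα⟩ := exists_swapsProd_eq α
  have hstep : ∀ x y, (swapsProd Lσ x = y ∨ swapsProd Lα x = y) →
      EqvGen (PairRel (Lσ ++ Lα)) x y := by
    rintro x y (rfl | rfl)
    · exact (eqvGen_swapsProd_apply Lσ x).mono fun _ _ h => List.mem_append_left _ h
    · exact (eqvGen_swapsProd_apply Lα x).mono fun _ _ h => List.mem_append_right _ h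
  have hcomp : numComponents (Lσ ++ Lα) ≤ R.card := by
    rw [numComponents, ← Nat.card_eq_finsetCard]
    refine Nat.card_le_card_of_surjective (fun r : R => Quotient.mk _ r.1) fun q => ?_
    induction q using Quotient.inductionOn with | h d => ?_
    obtain ⟨r, hr, hdr⟩ := hR d
    refine ⟨⟨r, hr⟩, Quotient.sound (EqvGen.symm _ _ ?_)⟩
    show EqvGen _ d r
    clear hr
    induction hdr with
    | refl => exact EqvGen.refl _
    | tail _ hs ih => exact ih.trans _ _ _ (hstep _ _ hs)
  have := numCycles_swapsProd_add_card_le (Lσ ++ Lα)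
  rw [swapsProd_append, List.length_append] at this
  omega

end Transpositions

end Equiv.Perm

namespace CombMap

variable (M : CombMap)

def Reach : M.D → M.D → Prop := ReflTransGen fun x y => M.σ x = y ∨ M.α x = y

variable {M}

theorem reach_of_sameCycle {f : Perm M.D} (hf : ∀ x, M.Reach x (f x)) {x y : M.D}
    (h : f.SameCycle x y) : M.Reach x y := by
  obtain ⟨n, rfl⟩ := Perm.sameCycle_iff_exists_pow_apply.mp h
  clear h
  induction n with
  | zero => exact ReflTransGen.refl
  | succ n ih => exact ih.trans (by rw [pow_succ', Perm.mul_apply]; exact hf _)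

theorem reach_σ (x : M.D) : M.Reach x (M.σ x) := ReflTransGen.single (Or.inl rfl)

theorem reach_α (x : M.D) : M.Reach x (M.α x) := ReflTransGen.single (Or.inr rfl)

theorem reach_φ (x : M.D) : M.Reach x (M.φ x) := (reach_α x).tail (Or.inl rfl)

theorem Reach.symm {x y : M.D} (h : M.Reach x y) : M.Reach y x := by
  induction h with
  | refl => exact ReflTransGen.refl
  | tail _ hs ih =>
    refine ReflTransGen.trans ?_ ih
    rcases hs with rfl | rfl
    · exact reach_of_sameCycle reach_σ (Perm.sameCycle_apply_left.mpr (Perm.SameCycle.refl _ _))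
    · exact reach_of_sameCycle reach_α (Perm.sameCycle_apply_left.mpr (Perm.SameCycle.refl _ _))

theorem φ_α (x : M.D) : M.φ (M.α x) = M.σ x := by
  simp [φ, M.α_invol]

theorem α_eq_σ_σ_of_φ_eq (hcub : M.Cubic) {x y : M.D} (h : M.φ x = y) :
    M.α x = M.σ (M.σ y) := by
  rw [← h]
  exact (hcub.1 _).symm

theorem φ_α_σ (hcub : M.Cubic) {x y : M.D} (h : M.φ x = y) : M.φ (M.α (M.σ y)) = M.α x := by
  rw [φ_α, α_eq_σ_σ_of_φ_eq hcub h]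

theorem FaceColoring.eq_of_sameCycle {n : ℕ} {c : M.D → Fin n} (hc : M.FaceColoring n c)
    {x y : M.D} (h : M.φ.SameCycle x y) : c x = c y := by
  obtain ⟨k, rfl⟩ := Perm.sameCycle_iff_exists_pow_apply.mp h
  clear h
  induction k with
  | zero => rfl
  | succ k ih => rw [ih, pow_succ', Perm.mul_apply, hc.1]

open Classical in
theorem FaceColoring.recolor {n : ℕ} {c : M.D → Fin n} (hc : M.FaceColoring n c) (x : M.D)
    (π : Perm (Fin n)) : M.FaceColoring n fun d => if M.Reach d x then π (c d) else c d := by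
  have hφ : ∀ d, M.Reach (M.φ d) x ↔ M.Reach d x := fun d =>
    ⟨(reach_φ d).trans, (reach_φ d).symm.trans⟩
  have hα : ∀ d, M.Reach (M.α d) x ↔ M.Reach d x := fun d =>
    ⟨(reach_α d).trans, (reach_α d).symm.trans⟩
  refine ⟨fun d => by simp only [hφ, hc.1], fun d => ?_⟩
  simp only [hα]
  split_ifs
  · exact π.injective.ne (hc.2 d)
  · exact hc.2 d

theorem card_eq_two_mul_numCycles_α : Fintype.card M.D = 2 * M.numCycles M.α :=
  Perm.card_eq_two_mul_numCycles M.α_invol M.α_fpf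

/-- Euler's inequality `V + F ≤ E + 2 * #components`. -/
theorem numCycles_σ_add_numCycles_φ_le (R : Finset M.D) (hR : ∀ d, ∃ r ∈ R, M.Reach d r) :
    M.numCycles M.σ + M.numCycles M.φ ≤ M.numCycles M.α + 2 * R.card := by
  have := Perm.numCycles_add_numCycles_add_numCycles_mul_le M.σ M.α R hR
  have : Fintype.card M.D = 2 * Perm.numCycles M.α := M.card_eq_two_mul_numCycles_α
  change Perm.numCycles M.σ + Perm.numCycles M.φ ≤ Perm.numCycles M.α + 2 * R.card
  unfold φ
  omega

abbrev rewire (g : Perm M.D) : CombMap where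
  D := M.D
  σ := M.σ
  α := g * M.α * g⁻¹
  α_invol d := by simp [M.α_invol]
  α_fpf d h := M.α_fpf (g⁻¹ d) (Perm.eq_inv_iff_eq.mpr h)

theorem rewire_α_apply (g : Perm M.D) (x : M.D) : (M.rewire g).α (g x) = g (M.α x) := by
  show (g * M.α * g⁻¹) (g x) = _
  simp

theorem numCycles_rewire_α (g : Perm M.D) :
    (M.rewire g).numCycles (M.rewire g).α = M.numCycles M.α :=
  Perm.numCycles_conj g M.α

theorem rewire_swap_mul_swap_φ (a b c d : M.D) :
    (M.rewire (swap a b * swap c d)).φ = swap (M.σ a) (M.σ b) * swap (M.σ c) (M.σ d) *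
      swap (M.φ c) (M.φ d) * swap (M.φ a) (M.φ b) * M.φ := by
  simp only [rewire, φ, swap_apply_apply, mul_inv_rev, swap_inv]
  group

end CombMap

/-- The hypotheses of `quadrilateral_reducible`, bundled. -/
structure QuadReduction (M M' : CombMap) where
  q1 : M.D
  q2 : M.D
  q3 : M.D
  q4 : M.D
  φ_q1 : M.φ q1 = q2
  φ_q2 : M.φ q2 = q3
  φ_q3 : M.φ q3 = q4
  φ_q4 : M.φ q4 = q1
  S : Finset M.D
  S_eq : S = {q1, q2, q3, q4, M.α q1, M.α q2, M.α q3, M.α q4,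
    M.σ q1, M.σ q2, M.σ q3, M.σ q4}
  card_S : S.card = 12
  ι : M'.D → M.D
  ι_injective : Function.Injective ι
  mem_range_ι : ∀ d, d ∈ Set.range ι ↔ d ∉ S
  ι_σ : ∀ d', ι (M'.σ d') = M.σ (ι d')
  p1 : M'.D
  p2 : M'.D
  p3 : M'.D
  p4 : M'.D
  ι_p1 : ι p1 = M.α (M.σ q1)
  ι_p2 : ι p2 = M.α (M.σ q2)
  ι_p3 : ι p3 = M.α (M.σ q3)
  ι_p4 : ι p4 = M.α (M.σ q4)
  ι_α : ∀ d', d' ≠ p1 → d' ≠ p2 → d' ≠ p3 → d' ≠ p4 →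
    ι (M'.α d') = M.α (ι d')
  α_p1 : M'.α p1 = p2
  α_p3 : M'.α p3 = p4

namespace QuadReduction

variable {M M' : CombMap} (Q : QuadReduction M M')

def dart : Fin 12 → M.D :=
  ![Q.q1, Q.q2, Q.q3, Q.q4, M.α Q.q1, M.α Q.q2, M.α Q.q3, M.α Q.q4,
    M.σ Q.q1, M.σ Q.q2, M.σ Q.q3, M.σ Q.q4]

theorem dart_injective : Function.Injective Q.dart := by
  have hS : (List.ofFn Q.dart).toFinset = Q.S := by
    simp [Q.S_eq, List.ofFn_succ, dart]
  have hlen : (List.ofFn Q.dart).dedup.length = (List.ofFn Q.dart).length := by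
    rw [← List.card_toFinset, hS, Q.card_S, List.length_ofFn]
  exact List.nodup_ofFn.mp
    (List.dedup_eq_self.mp (List.Sublist.eq_of_length (List.dedup_sublist _) hlen))

theorem dart_ne (i j : Fin 12) (h : i ≠ j := by decide) : Q.dart i ≠ Q.dart j :=
  Q.dart_injective.ne h

theorem dart_mem (i : Fin 12) : Q.dart i ∈ Q.S := by
  rw [Q.S_eq]
  fin_cases i <;> simp [dart]

theorem ι_ne_dart (z : M'.D) (i : Fin 12) : Q.ι z ≠ Q.dart i :=
  fun h => (Q.mem_range_ι _).mp ⟨z, h⟩ (Q.dart_mem i)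

theorem α_p2 : M'.α Q.p2 = Q.p1 := by rw [← Q.α_p1, M'.α_invol]

theorem α_p4 : M'.α Q.p4 = Q.p3 := by rw [← Q.α_p3, M'.α_invol]

theorem p_ne :
    Q.p1 ≠ Q.p2 ∧ Q.p1 ≠ Q.p3 ∧ Q.p1 ≠ Q.p4 ∧ Q.p2 ≠ Q.p3 ∧ Q.p2 ≠ Q.p4 ∧
      Q.p3 ≠ Q.p4 := by
  refine ⟨?_, ?_, ?_, ?_, ?_, ?_⟩ <;> intro h <;> have := congrArg (M.α ∘ Q.ι) h <;>
    simp only [Function.comp, Q.ι_p1, Q.ι_p2, Q.ι_p3, Q.ι_p4, M.α_invol] at this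
  exacts [absurd this (Q.dart_ne 8 9), absurd this (Q.dart_ne 8 10),
    absurd this (Q.dart_ne 8 11), absurd this (Q.dart_ne 9 10), absurd this (Q.dart_ne 9 11),
    absurd this (Q.dart_ne 10 11)]

theorem α_ι_eq {z : M'.D} {x : M.D} (h : Q.ι z = M.α x) : M.α (Q.ι z) = x := by
  rw [h, M.α_invol]

theorem φ_ι_of_α_eq {x : M.D} {z : M'.D} (h : M.α x = Q.ι z) : M.φ x = Q.ι (M'.σ z) := by
  rw [Q.ι_σ, ← h]
  rfl

theorem φ_ι {z : M'.D} (h1 : z ≠ Q.p1) (h2 : z ≠ Q.p2) (h3 : z ≠ Q.p3) (h4 : z ≠ Q.p4) :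
    M.φ (Q.ι z) = Q.ι (M'.φ z) :=
  Q.φ_ι_of_α_eq (Q.ι_α z h1 h2 h3 h4).symm

theorem φ'_p1 : M'.φ Q.p1 = M'.σ Q.p2 := congrArg M'.σ Q.α_p1

theorem φ'_p2 : M'.φ Q.p2 = M'.σ Q.p1 := congrArg M'.σ Q.α_p2

theorem φ'_p3 : M'.φ Q.p3 = M'.σ Q.p4 := congrArg M'.σ Q.α_p3

theorem φ'_p4 : M'.φ Q.p4 = M'.σ Q.p3 := congrArg M'.σ Q.α_p4

section Extension

/-- Colors of the darts `dart i`: `t` on the quadrilateral, while `α qᵢ` and `σ qᵢ`, which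
lie on the face of `M` across the edge of `qᵢ`, get the color of the face of `M'` through
`α' pᵢ`. -/
def quadColors (c' : M'.D → Fin 4) (t : Fin 4) : Fin 12 → Fin 4 :=
  ![t, t, t, t, c' Q.p2, c' Q.p1, c' Q.p4, c' Q.p3, c' Q.p2, c' Q.p1, c' Q.p4, c' Q.p3]

noncomputable def extendColoring (c' : M'.D → Fin 4) (t : Fin 4) : M.D → Fin 4 :=
  Function.extend Q.dart (Q.quadColors c' t) (Function.extend Q.ι c' fun _ => 0)

variable {c' : M'.D → Fin 4} {t : Fin 4}

theorem extendColoring_dart (i : Fin 12) :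
    Q.extendColoring c' t (Q.dart i) = Q.quadColors c' t i :=
  Q.dart_injective.extend_apply _ _ i

theorem extendColoring_ι (z : M'.D) : Q.extendColoring c' t (Q.ι z) = c' z := by
  rw [extendColoring, Function.extend_apply' _ _ _ fun ⟨i, hi⟩ => Q.ι_ne_dart z i hi.symm,
    Q.ι_injective.extend_apply]

theorem extendColoring_φ (hcub : M.Cubic) (hc' : M'.FaceColoring 4 c')
    (h13 : c' Q.p1 = c' Q.p3) (d : M.D) :
    Q.extendColoring c' t (M.φ d) = Q.extendColoring c' t d := by
  have e := Q.extendColoring_dart (c' := c') (t := t)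
  by_cases hd : d ∈ Q.S
  · rw [Q.S_eq] at hd
    simp only [Finset.mem_insert, Finset.mem_singleton] at hd
    rcases hd with rfl | rfl | rfl | rfl | rfl | rfl | rfl | rfl | rfl | rfl | rfl | rfl
    · rw [Q.φ_q1]; exact (e 1).trans (e 0).symm
    · rw [Q.φ_q2]; exact (e 2).trans (e 1).symm
    · rw [Q.φ_q3]; exact (e 3).trans (e 2).symm
    · rw [Q.φ_q4]; exact (e 0).trans (e 3).symm
    · rw [CombMap.φ_α]; exact (e 8).trans (e 4).symm
    · rw [CombMap.φ_α]; exact (e 9).trans (e 5).symm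
    · rw [CombMap.φ_α]; exact (e 10).trans (e 6).symm
    · rw [CombMap.φ_α]; exact (e 11).trans (e 7).symm
    · rw [Q.φ_ι_of_α_eq Q.ι_p1.symm, extendColoring_ι, ← Q.φ'_p2, hc'.1]; exact (e 8).symm
    · rw [Q.φ_ι_of_α_eq Q.ι_p2.symm, extendColoring_ι, ← Q.φ'_p1, hc'.1]; exact (e 9).symm
    · rw [Q.φ_ι_of_α_eq Q.ι_p3.symm, extendColoring_ι, ← Q.φ'_p4, hc'.1]; exact (e 10).symm
    · rw [Q.φ_ι_of_α_eq Q.ι_p4.symm, extendColoring_ι, ← Q.φ'_p3, hc'.1]; exact (e 11).symm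
  · obtain ⟨z, rfl⟩ := (Q.mem_range_ι d).mpr hd
    rw [extendColoring_ι]
    by_cases h1 : z = Q.p1
    · rw [h1, Q.ι_p1, CombMap.φ_α_σ hcub Q.φ_q4]; exact (e 7).trans h13.symm
    by_cases h2 : z = Q.p2
    · rw [h2, Q.ι_p2, CombMap.φ_α_σ hcub Q.φ_q1]; exact e 4
    by_cases h3 : z = Q.p3
    · rw [h3, Q.ι_p3, CombMap.φ_α_σ hcub Q.φ_q2]; exact (e 5).trans h13
    by_cases h4 : z = Q.p4
    · rw [h4, Q.ι_p4, CombMap.φ_α_σ hcub Q.φ_q3]; exact e 6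
    rw [Q.φ_ι h1 h2 h3 h4, extendColoring_ι, hc'.1]

theorem extendColoring_ne_α_of_mem (hc' : M'.FaceColoring 4 c') (h13 : c' Q.p1 = c' Q.p3)
    (ht : t ≠ c' Q.p1 ∧ t ≠ c' Q.p2 ∧ t ≠ c' Q.p4) {d : M.D} (hd : d ∈ Q.S) :
    Q.extendColoring c' t d ≠ Q.extendColoring c' t (M.α d) := by
  have e := Q.extendColoring_dart (c' := c') (t := t)
  have key : ∀ i j, Q.quadColors c' t i ≠ Q.quadColors c' t j →
      Q.extendColoring c' t (Q.dart i) ≠ Q.extendColoring c' t (Q.dart j) := fun i j h => by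
    rwa [e, e]
  have ht3 : t ≠ c' Q.p3 := h13 ▸ ht.1
  have edge : ∀ z, c' (M'.α z) ≠ c' z := fun z => (hc'.2 z).symm
  have e1 : c' Q.p2 ≠ c' Q.p1 := Q.α_p1 ▸ edge Q.p1
  have e2 : c' Q.p1 ≠ c' Q.p2 := Q.α_p2 ▸ edge Q.p2
  have e3 : c' Q.p4 ≠ c' Q.p3 := Q.α_p3 ▸ edge Q.p3
  have e4 : c' Q.p3 ≠ c' Q.p4 := Q.α_p4 ▸ edge Q.p4
  rw [Q.S_eq] at hd
  simp only [Finset.mem_insert, Finset.mem_singleton] at hd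
  rcases hd with rfl | rfl | rfl | rfl | rfl | rfl | rfl | rfl | rfl | rfl | rfl | rfl
  · exact key 0 4 ht.2.1
  · exact key 1 5 ht.1
  · exact key 2 6 ht.2.2
  · exact key 3 7 ht3
  · rw [M.α_invol]; exact (key 0 4 ht.2.1).symm
  · rw [M.α_invol]; exact (key 1 5 ht.1).symm
  · rw [M.α_invol]; exact (key 2 6 ht.2.2).symm
  · rw [M.α_invol]; exact (key 3 7 ht3).symm
  · rw [← Q.ι_p1, extendColoring_ι]; exact (e 8).trans_ne e1
  · rw [← Q.ι_p2, extendColoring_ι]; exact (e 9).trans_ne e2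
  · rw [← Q.ι_p3, extendColoring_ι]; exact (e 10).trans_ne e3
  · rw [← Q.ι_p4, extendColoring_ι]; exact (e 11).trans_ne e4

theorem extendColoring_ne_α (hc' : M'.FaceColoring 4 c') (h13 : c' Q.p1 = c' Q.p3)
    (ht : t ≠ c' Q.p1 ∧ t ≠ c' Q.p2 ∧ t ≠ c' Q.p4) (d : M.D) :
    Q.extendColoring c' t d ≠ Q.extendColoring c' t (M.α d) := by
  have hS : ∀ {d}, d ∈ Q.S → Q.extendColoring c' t d ≠ Q.extendColoring c' t (M.α d) :=
    Q.extendColoring_ne_α_of_mem hc' h13 ht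
  by_cases hd : d ∈ Q.S
  · exact hS hd
  obtain ⟨z, rfl⟩ := (Q.mem_range_ι d).mpr hd
  by_cases h1 : z = Q.p1
  · rw [h1, Q.ι_p1, M.α_invol]; exact (hS (Q.dart_mem 8)).symm
  by_cases h2 : z = Q.p2
  · rw [h2, Q.ι_p2, M.α_invol]; exact (hS (Q.dart_mem 9)).symm
  by_cases h3 : z = Q.p3
  · rw [h3, Q.ι_p3, M.α_invol]; exact (hS (Q.dart_mem 10)).symm
  by_cases h4 : z = Q.p4
  · rw [h4, Q.ι_p4, M.α_invol]; exact (hS (Q.dart_mem 11)).symm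
  rw [← Q.ι_α z h1 h2 h3 h4, extendColoring_ι, extendColoring_ι]
  exact hc'.2 z

theorem exists_faceColoring (hcub : M.Cubic) (hc' : M'.FaceColoring 4 c')
    (h13 : c' Q.p1 = c' Q.p3) : ∃ c : M.D → Fin 4, M.FaceColoring 4 c := by
  obtain ⟨t, ht⟩ : ∃ t : Fin 4, t ≠ c' Q.p1 ∧ t ≠ c' Q.p2 ∧ t ≠ c' Q.p4 := by
    have : ∀ a b c : Fin 4, ∃ t, t ≠ a ∧ t ≠ b ∧ t ≠ c := by decide
    exact this _ _ _
  exact ⟨Q.extendColoring c' t, Q.extendColoring_φ hcub hc' h13,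
    Q.extendColoring_ne_α hc' h13 ht⟩

end Extension

/-- Conjugating `α` by `swaps` re-pairs the half-edges `σ qᵢ`, `ι pᵢ` (edges of `M`) into
`σ q1 σ q2`, `σ q3 σ q4`, `ι p1 ι p2`, `ι p3 ι p4`. -/
def swaps : Perm M.D := swap (M.σ Q.q1) (Q.ι Q.p2) * swap (M.σ Q.q3) (Q.ι Q.p4)

/-- `M` cut along the four edges leaving the quadrilateral: the disjoint union of a copy of `M'`
(the image of `ι`) and of the quadrilateral with its four vertices. -/
abbrev cut : CombMap := M.rewire Q.swaps

theorem swaps_apply_of_ne {x : M.D} (h1 : x ≠ M.σ Q.q1) (h2 : x ≠ Q.ι Q.p2)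
    (h3 : x ≠ M.σ Q.q3) (h4 : x ≠ Q.ι Q.p4) : Q.swaps x = x := by
  rw [swaps, Perm.mul_apply, swap_apply_of_ne_of_ne h3 h4, swap_apply_of_ne_of_ne h1 h2]

theorem swaps_dart (i : Fin 12) (h8 : i ≠ 8 := by decide) (h10 : i ≠ 10 := by decide) :
    Q.swaps (Q.dart i) = Q.dart i :=
  Q.swaps_apply_of_ne (Q.dart_ne i 8 h8) (Q.ι_ne_dart _ i).symm (Q.dart_ne i 10 h10)
    (Q.ι_ne_dart _ i).symm

theorem swaps_ι {z : M'.D} (h2 : z ≠ Q.p2) (h4 : z ≠ Q.p4) : Q.swaps (Q.ι z) = Q.ι z :=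
  Q.swaps_apply_of_ne (Q.ι_ne_dart z 8) (Q.ι_injective.ne h2) (Q.ι_ne_dart z 10)
    (Q.ι_injective.ne h4)

theorem swaps_σ_q1 : Q.swaps (M.σ Q.q1) = Q.ι Q.p2 := by
  rw [swaps, Perm.mul_apply,
    swap_apply_of_ne_of_ne (show M.σ Q.q1 ≠ M.σ Q.q3 from Q.dart_ne 8 10)
      (show Q.ι Q.p4 ≠ M.σ Q.q1 from Q.ι_ne_dart _ 8).symm, swap_apply_left]

theorem swaps_σ_q3 : Q.swaps (M.σ Q.q3) = Q.ι Q.p4 := by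
  obtain ⟨-, -, -, -, h24, -⟩ := Q.p_ne
  rw [swaps, Perm.mul_apply, swap_apply_left,
    swap_apply_of_ne_of_ne (show Q.ι Q.p4 ≠ M.σ Q.q1 from Q.ι_ne_dart _ 8)
      (Q.ι_injective.ne h24.symm)]

theorem cut_α_swaps (x : M.D) : Q.cut.α (Q.swaps x) = Q.swaps (M.α x) :=
  M.rewire_α_apply _ x

theorem cut_α_ι (z : M'.D) : Q.cut.α (Q.ι z) = Q.ι (M'.α z) := by
  obtain ⟨h12, h13, h14, h23, h24, h34⟩ := Q.p_ne
  by_cases h1 : z = Q.p1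
  · rw [h1, ← Q.swaps_ι h12 h14, cut_α_swaps, Q.ι_p1, M.α_invol, swaps_σ_q1, Q.α_p1]
  by_cases h2 : z = Q.p2
  · rw [h2, ← Q.swaps_σ_q1, cut_α_swaps, ← Q.ι_p1, Q.swaps_ι h12 h14, Q.α_p2]
  by_cases h3 : z = Q.p3
  · rw [h3, ← Q.swaps_ι h23.symm h34, cut_α_swaps, Q.ι_p3, M.α_invol, swaps_σ_q3, Q.α_p3]
  by_cases h4 : z = Q.p4
  · rw [h4, ← Q.swaps_σ_q3, cut_α_swaps, ← Q.ι_p3, Q.swaps_ι h23.symm h34, Q.α_p4]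
  have h2' : M'.α z ≠ Q.p2 := fun h => h1 (by rw [← M'.α_invol z, h, Q.α_p2])
  have h4' : M'.α z ≠ Q.p4 := fun h => h3 (by rw [← M'.α_invol z, h, Q.α_p4])
  rw [← Q.swaps_ι h2 h4, cut_α_swaps, ← Q.ι_α z h1 h2 h3 h4, Q.swaps_ι h2' h4']

theorem cut_φ_ι (z : M'.D) : Q.cut.φ (Q.ι z) = Q.ι (M'.φ z) := by
  show M.σ (Q.cut.α (Q.ι z)) = _
  rw [cut_α_ι, ← Q.ι_σ]
  rfl

theorem cut_α_of_ne {x : M.D} (h1 : x ≠ M.σ Q.q1) (h2 : x ≠ M.σ Q.q2) (h3 : x ≠ M.σ Q.q3)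
    (h4 : x ≠ M.σ Q.q4) (h5 : x ≠ Q.ι Q.p1) (h6 : x ≠ Q.ι Q.p2) (h7 : x ≠ Q.ι Q.p3)
    (h8 : x ≠ Q.ι Q.p4) : Q.cut.α x = M.α x := by
  have hne : ∀ {y}, x ≠ M.α y → M.α x ≠ y := fun hxy h => hxy (by rw [← h, M.α_invol])
  rw [← Q.swaps_apply_of_ne h1 h6 h3 h8, Q.cut_α_swaps, Q.swaps_apply_of_ne h1 h6 h3 h8,
    Q.swaps_apply_of_ne (hne (by rwa [← Q.ι_p1])) (hne (by rwa [Q.α_ι_eq Q.ι_p2]))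
      (hne (by rwa [← Q.ι_p3])) (hne (by rwa [Q.α_ι_eq Q.ι_p4]))]

theorem cut_reach_ι {x y : M'.D} (h : M'.Reach x y) : Q.cut.Reach (Q.ι x) (Q.ι y) := by
  induction h with
  | refl => exact ReflTransGen.refl
  | tail _ hs ih =>
    refine ih.tail ?_
    rcases hs with rfl | rfl
    · exact Or.inl (Q.ι_σ _).symm
    · exact Or.inr (Q.cut_α_ι _)

theorem cut_reach_q1 (hcub : M.Cubic) {x : M.D} (hx : x ∈ Q.S) : Q.cut.Reach x Q.q1 := by
  have next : ∀ {x y : M.D}, M.φ x = y → Q.swaps x = x → Q.swaps (M.α x) = M.α x →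
      Q.cut.Reach x y := by
    intro x y hxy hx hαx
    have hα : Q.cut.α x = M.α x := by rw [← hαx, ← Q.cut_α_swaps, hx]
    have h : Q.cut.Reach x (M.σ (Q.cut.α x)) := CombMap.reach_φ (M := Q.cut) x
    rw [hα] at h
    rw [← hxy]
    exact h
  have h4 : Q.cut.Reach Q.q4 Q.q1 := next Q.φ_q4 (Q.swaps_dart 3) (Q.swaps_dart 7)
  have h3 : Q.cut.Reach Q.q3 Q.q1 := (next Q.φ_q3 (Q.swaps_dart 2) (Q.swaps_dart 6)).trans h4
  have h2 : Q.cut.Reach Q.q2 Q.q1 := (next Q.φ_q2 (Q.swaps_dart 1) (Q.swaps_dart 5)).trans h3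
  have hα : ∀ {x y : M.D}, M.φ x = y → Q.cut.Reach (M.α x) y := fun h => by
    rw [CombMap.α_eq_σ_σ_of_φ_eq hcub h]
    exact ReflTransGen.single (Or.inl (hcub.1 _))
  have hσ : ∀ y : M.D, Q.cut.Reach (M.σ y) y := fun y =>
    (CombMap.reach_σ (M := Q.cut) (M.σ y)).tail (Or.inl (hcub.1 y))
  rw [Q.S_eq] at hx
  simp only [Finset.mem_insert, Finset.mem_singleton] at hx
  rcases hx with rfl | rfl | rfl | rfl | rfl | rfl | rfl | rfl | rfl | rfl | rfl | rfl
  · exact ReflTransGen.refl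
  · exact h2
  · exact h3
  · exact h4
  · exact (hα Q.φ_q1).trans h2
  · exact (hα Q.φ_q2).trans h3
  · exact (hα Q.φ_q3).trans h4
  · exact hα Q.φ_q4
  · exact hσ _
  · exact (hσ _).trans h2
  · exact (hσ _).trans h3
  · exact (hσ _).trans h4

theorem cut_reach (hcub : M.Cubic) (hconn : M.Connected) (hp : M'.Reach Q.p1 Q.p3)
    (d : M.D) : Q.cut.Reach d Q.q1 ∨ Q.cut.Reach d (Q.ι Q.p1) := by
  have hS : ∀ x ∈ Q.S, Q.cut.Reach x Q.q1 ∨ Q.cut.Reach x (Q.ι Q.p1) :=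
    fun x hx => Or.inl (Q.cut_reach_q1 hcub hx)
  have hp' : ∀ z, M'.Reach z Q.p1 →
      Q.cut.Reach (Q.ι z) Q.q1 ∨ Q.cut.Reach (Q.ι z) (Q.ι Q.p1) :=
    fun _ hz => Or.inr (Q.cut_reach_ι hz)
  have hp3 : M'.Reach Q.p3 Q.p1 := hp.symm
  have hp4 : M'.Reach Q.p4 Q.p1 := ReflTransGen.head (Or.inr Q.α_p4) hp3
  induction hconn Q.q1 d with
  | refl => exact Or.inl ReflTransGen.refl
  | @tail x y _ hs ih =>
    rcases hs with rfl | rfl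
    · exact ih.imp (CombMap.reach_σ (M := Q.cut) x).symm.trans
        (CombMap.reach_σ (M := Q.cut) x).symm.trans
    by_cases hx : x = M.σ Q.q1 ∨ x = M.σ Q.q2 ∨ x = M.σ Q.q3 ∨ x = M.σ Q.q4 ∨
      x = Q.ι Q.p1 ∨ x = Q.ι Q.p2 ∨ x = Q.ι Q.p3 ∨ x = Q.ι Q.p4
    · rcases hx with rfl | rfl | rfl | rfl | rfl | rfl | rfl | rfl
      · rw [← Q.ι_p1]; exact hp' _ ReflTransGen.refl
      · rw [← Q.ι_p2]; exact hp' _ (ReflTransGen.single (Or.inr Q.α_p2))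
      · rw [← Q.ι_p3]; exact hp' _ hp3
      · rw [← Q.ι_p4]; exact hp' _ hp4
      · rw [Q.α_ι_eq Q.ι_p1]; exact hS _ (Q.dart_mem 8)
      · rw [Q.α_ι_eq Q.ι_p2]; exact hS _ (Q.dart_mem 9)
      · rw [Q.α_ι_eq Q.ι_p3]; exact hS _ (Q.dart_mem 10)
      · rw [Q.α_ι_eq Q.ι_p4]; exact hS _ (Q.dart_mem 11)
    simp only [not_or] at hx
    obtain ⟨h1, h2, h3, h4, h5, h6, h7, h8⟩ := hx
    have hα := Q.cut_α_of_ne h1 h2 h3 h4 h5 h6 h7 h8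
    have hrev : Q.cut.Reach (M.α x) x := hα ▸ (CombMap.reach_α (M := Q.cut) x).symm
    exact ih.imp hrev.trans hrev.trans

theorem numCycles_cut_φ_le (hcub : M.Cubic) (hplanar : M.Planar) (hp : M'.Reach Q.p1 Q.p3) :
    Perm.numCycles Q.cut.φ ≤ Perm.numCycles M.φ + 2 := by
  have heuler := Q.cut.numCycles_σ_add_numCycles_φ_le {Q.q1, Q.ι Q.p1} fun d => by
    rcases Q.cut_reach hcub hplanar.1 hp d with h | h
    · exact ⟨_, by simp, h⟩
    · exact ⟨_, by simp, h⟩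
  have hα : Perm.numCycles Q.cut.α = Perm.numCycles M.α := M.numCycles_rewire_α Q.swaps
  have hM : Perm.numCycles M.σ + Perm.numCycles M.φ = Perm.numCycles M.α + 2 := hplanar.2
  have hR := Finset.card_le_two (a := Q.q1) (b := Q.ι Q.p1)
  change Perm.numCycles M.σ + Perm.numCycles Q.cut.φ ≤
    Perm.numCycles Q.cut.α + 2 * _ at heuler
  omega

theorem cut_φ_eq (hcub : M.Cubic) :
    Q.cut.φ = swap (M.α Q.q4) (Q.ι (M'.σ Q.p2)) * swap (M.α Q.q2) (Q.ι (M'.σ Q.p4)) *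
      swap (Q.ι (M'.σ Q.p3)) (M.α Q.q3) * swap (Q.ι (M'.σ Q.p1)) (M.α Q.q1) * M.φ := by
  show (M.rewire Q.swaps).φ = _
  rw [swaps, M.rewire_swap_mul_swap_φ, ← CombMap.α_eq_σ_σ_of_φ_eq hcub Q.φ_q4,
    ← CombMap.α_eq_σ_σ_of_φ_eq hcub Q.φ_q2, ← Q.ι_σ, ← Q.ι_σ,
    Q.φ_ι_of_α_eq Q.ι_p3.symm, Q.φ_ι_of_α_eq Q.ι_p1.symm, Q.ι_p4, Q.ι_p2,
    CombMap.φ_α_σ hcub Q.φ_q3, CombMap.φ_α_σ hcub Q.φ_q1]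

theorem exists_ι_eq_of_cut_sameCycle {z : M'.D} {y : M.D}
    (h : Q.cut.φ.SameCycle (Q.ι z) y) : ∃ w, Q.ι w = y ∧ M'.φ.SameCycle z w :=
  h.exists_apply_eq_of_semiconj Q.cut_φ_ι

theorem not_cut_sameCycle_ι_dart (z : M'.D) (i : Fin 12) :
    ¬ Q.cut.φ.SameCycle (Q.ι z) (Q.dart i) := fun h => by
  obtain ⟨w, hw, -⟩ := Q.exists_ι_eq_of_cut_sameCycle h
  exact Q.ι_ne_dart w i hw

theorem sameCycle_ι_σ_p1_α_q1 : M.φ.SameCycle (Q.ι (M'.σ Q.p1)) (M.α Q.q1) := by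
  have : M.φ (M.φ (M.α Q.q1)) = Q.ι (M'.σ Q.p1) := by
    rw [CombMap.φ_α, Q.φ_ι_of_α_eq Q.ι_p1.symm]
  rw [← this, Perm.sameCycle_apply_left, Perm.sameCycle_apply_left]

theorem sameCycle_ι_σ_p3_α_q3 :
    (swap (Q.ι (M'.σ Q.p1)) (M.α Q.q1) * M.φ).SameCycle (Q.ι (M'.σ Q.p3)) (M.α Q.q3) := by
  obtain ⟨-, h13, -, -, -, -⟩ := Q.p_ne
  set f := swap (Q.ι (M'.σ Q.p1)) (M.α Q.q1) * M.φ
  have h1 : f (M.α Q.q3) = M.σ Q.q3 := by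
    rw [Perm.mul_apply, CombMap.φ_α, swap_apply_of_ne_of_ne
      (show M.σ Q.q3 ≠ Q.ι (M'.σ Q.p1) from (Q.ι_ne_dart _ 10).symm)
      (show M.σ Q.q3 ≠ M.α Q.q1 from Q.dart_ne 10 4)]
  have h2 : f (M.σ Q.q3) = Q.ι (M'.σ Q.p3) := by
    rw [Perm.mul_apply, Q.φ_ι_of_α_eq Q.ι_p3.symm, swap_apply_of_ne_of_ne
      (Q.ι_injective.ne (M'.σ.injective.ne h13.symm))
      (show Q.ι (M'.σ Q.p3) ≠ M.α Q.q1 from Q.ι_ne_dart _ 4)]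
  rw [← h2, ← h1, Perm.sameCycle_apply_left, Perm.sameCycle_apply_left]

/-- Passing from `M` to `cut` splits the faces through `α q1` and `α q3` and, as `p1` and `p3`
lie on different faces of `M'`, also those through `α q2` and `α q4`. -/
theorem numCycles_cut_φ (hcub : M.Cubic) (h : ¬ M'.φ.SameCycle Q.p1 Q.p3) :
    Perm.numCycles Q.cut.φ = Perm.numCycles M.φ + 4 := by
  set sa := swap (M.α Q.q4) (Q.ι (M'.σ Q.p2))
  set sb := swap (M.α Q.q2) (Q.ι (M'.σ Q.p4))
  set sd := swap (Q.ι (M'.σ Q.p3)) (M.α Q.q3)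
  set sc := swap (Q.ι (M'.σ Q.p1)) (M.α Q.q1)
  have hcut : Q.cut.φ = sa * (sb * (sd * (sc * M.φ))) := by
    rw [Q.cut_φ_eq hcub]
    simp only [mul_assoc]
    rfl
  have hc : Perm.numCycles (sc * M.φ) = Perm.numCycles M.φ + 1 :=
    Perm.numCycles_swap_mul_of_sameCycle (Q.ι_ne_dart _ 4) Q.sameCycle_ι_σ_p1_α_q1
  have hd : Perm.numCycles (sd * (sc * M.φ)) = Perm.numCycles (sc * M.φ) + 1 :=
    Perm.numCycles_swap_mul_of_sameCycle (Q.ι_ne_dart _ 6) Q.sameCycle_ι_σ_p3_α_q3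
  have ha : Perm.numCycles Q.cut.φ = Perm.numCycles (sa * Q.cut.φ) + 1 :=
    Perm.numCycles_eq_numCycles_swap_mul_add_one
      fun hs => Q.not_cut_sameCycle_ι_dart _ 7 hs.symm
  have hb : Perm.numCycles (sa * Q.cut.φ) = Perm.numCycles (sb * (sa * Q.cut.φ)) + 1 := by
    refine Perm.numCycles_eq_numCycles_swap_mul_add_one fun hs => ?_
    rcases hs.mergeRel_of_swap_mul with hs | ⟨-, hs⟩ | ⟨hs, -⟩
    · exact Q.not_cut_sameCycle_ι_dart _ 5 hs.symm
    · obtain ⟨w, hw, hs⟩ := Q.exists_ι_eq_of_cut_sameCycle hs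
      rw [Q.ι_injective hw, ← Q.φ'_p1, ← Q.φ'_p3, Perm.sameCycle_apply_left,
        Perm.sameCycle_apply_right] at hs
      exact h hs
    · exact Q.not_cut_sameCycle_ι_dart _ 5 hs.symm
  rw [hcut, swap_mul_self_mul, swap_mul_self_mul] at hb
  rw [hcut, swap_mul_self_mul] at ha
  rw [hcut]
  omega

theorem sameCycle_p1_p3_of_reach (hcub : M.Cubic) (hplanar : M.Planar) (hp : M'.Reach Q.p1 Q.p3) :
    M'.φ.SameCycle Q.p1 Q.p3 := by
  by_contra h
  have := Q.numCycles_cut_φ hcub h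
  have := Q.numCycles_cut_φ_le hcub hplanar hp
  omega

end QuadReduction

/-- `M'` is `M` with the twelve darts `S` at the vertices of the quadrilateral removed (`ι`
embeds the remaining darts) and the far ends `p1, p2` and `p3, p4` of the four edges leaving it
joined into two edges. -/
theorem quadrilateral_reducible_general
    (M M' : CombMap) (hcub : M.Cubic) (hplanar : M.Planar)
    (q1 q2 q3 q4 : M.D)
    (hf1 : M.φ q1 = q2) (hf2 : M.φ q2 = q3) (hf3 : M.φ q3 = q4) (hf4 : M.φ q4 = q1)
    (S : Finset M.D)
    (hS : S = {q1, q2, q3, q4, M.α q1, M.α q2, M.α q3, M.α q4,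
               M.σ q1, M.σ q2, M.σ q3, M.σ q4})
    (hScard : S.card = 12)
    (ι : M'.D → M.D) (hι : Function.Injective ι)
    (hrange : ∀ d : M.D, d ∈ Set.range ι ↔ d ∉ S)
    (hσ : ∀ d', ι (M'.σ d') = M.σ (ι d'))
    (p1 p2 p3 p4 : M'.D)
    (hp1 : ι p1 = M.α (M.σ q1)) (hp2 : ι p2 = M.α (M.σ q2))
    (hp3 : ι p3 = M.α (M.σ q3)) (hp4 : ι p4 = M.α (M.σ q4))
    (hα : ∀ d', d' ≠ p1 → d' ≠ p2 → d' ≠ p3 → d' ≠ p4 → ι (M'.α d') = M.α (ι d'))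
    (hα12 : M'.α p1 = p2) (hα34 : M'.α p3 = p4)
    (h4 : ∃ c : M'.D → Fin 4, M'.FaceColoring 4 c) :
    ∃ c : M.D → Fin 4, M.FaceColoring 4 c := by
  let Q : QuadReduction M M' := ⟨q1, q2, q3, q4, hf1, hf2, hf3, hf4, S, hS, hScard, ι, hι,
    hrange, hσ, p1, p2, p3, p4, hp1, hp2, hp3, hp4, hα, hα12, hα34⟩
  obtain ⟨c', hc'⟩ := h4
  by_cases hp : M'.Reach p1 p3
  · exact Q.exists_faceColoring hcub hc'
      (hc'.eq_of_sameCycle (Q.sameCycle_p1_p3_of_reach hcub hplanar hp))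
  · -- a Kempe switch of the colors `c' p1`, `c' p3` on the component of `p3`
    exact Q.exists_faceColoring hcub (hc'.recolor p3 (swap (c' p1) (c' p3)))
      (by rw [if_neg hp, if_pos (show M'.Reach p3 p3 from ReflTransGen.refl),
        swap_apply_right])

/-- **Reducibility of the quadrilateral.**  Let `M` be a cubic plane graph with a
quadrilateral face with boundary darts `q1, q2, q3, q4` (a `φ`-cycle).  The external
darts at the four quadrilateral vertices are `σ q1, …, σ q4`.  Let `M'` be the
smaller cubic plane graph obtained by deleting the quadrilateral: its darts are
those of `M` outside the twelve darts
`S = {q1, …, q4, α q1, …, α q4, σ q1, …, σ q4}` (via the injection `ι`), with the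
same rotations, and the four boundary edges joined crossing-free in adjacent pairs:
the far ends `α (σ q1), α (σ q2)` are merged into one edge, as are
`α (σ q3), α (σ q4)`.  If `M'` is 4-face-colorable then so is `M`.
(Classically, not every 4-face-coloring of `M'` extends directly; in general one
must first perform a Kempe switch — this proof-method caveat is not part of the
formal mathematical content of the implication.) -/
theorem quadrilateral_reducible
    (M M' : CombMap) (hcub : M.Cubic) (hplanar : M.Planar)
    (q1 q2 q3 q4 : M.D)
    (hf1 : M.φ q1 = q2) (hf2 : M.φ q2 = q3) (hf3 : M.φ q3 = q4) (hf4 : M.φ q4 = q1)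
    (S : Finset M.D)
    (hS : S = {q1, q2, q3, q4, M.α q1, M.α q2, M.α q3, M.α q4,
               M.σ q1, M.σ q2, M.σ q3, M.σ q4})
    (hScard : S.card = 12)
    (hout1 : M.α (M.σ q1) ∉ S) (hout2 : M.α (M.σ q2) ∉ S)
    (hout3 : M.α (M.σ q3) ∉ S) (hout4 : M.α (M.σ q4) ∉ S)
    (ι : M'.D → M.D) (hι : Function.Injective ι)
    (hrange : ∀ d : M.D, d ∈ Set.range ι ↔ d ∉ S)
    (hσ : ∀ d', ι (M'.σ d') = M.σ (ι d'))
    (p1 p2 p3 p4 : M'.D)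
    (hp1 : ι p1 = M.α (M.σ q1)) (hp2 : ι p2 = M.α (M.σ q2))
    (hp3 : ι p3 = M.α (M.σ q3)) (hp4 : ι p4 = M.α (M.σ q4))
    (hα : ∀ d', d' ≠ p1 → d' ≠ p2 → d' ≠ p3 → d' ≠ p4 → ι (M'.α d') = M.α (ι d'))
    (hα12 : M'.α p1 = p2) (hα34 : M'.α p3 = p4)
    (h4 : ∃ c : M'.D → Fin 4, M'.FaceColoring 4 c) :
    ∃ c : M.D → Fin 4, M.FaceColoring 4 c :=
  quadrilateral_reducible_general M M' hcub hplanar q1 q2 q3 q4 hf1 hf2 hf3 hf4 S hS hScard ι hι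
    hrange hσ p1 p2 p3 p4 hp1 hp2 hp3 hp4 hα hα12 hα34 h4
end

section
/- The number of multisets of arcs {arc[i, σ(i)] : i ∈ {1,...,6}}, taken over all fixed-point-free permutations σ of {1,...,6} (fixed-point-free involutions together with longer-cycle arc structures on 6 boundary spokes), is 130. -/
set_option maxRecDepth 100000
set_option maxHeartbeats 4000000


/-- The multiset of arcs `{i, σ i}` (as unordered pairs) determined by a
fixed-point-free permutation `σ` of the six boundary spokes. -/
def arcMultiset (σ : Equiv.Perm (Fin 6)) : Multiset (Sym2 (Fin 6)) :=
  Finset.univ.val.map fun i => s(i, σ i)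

/-! ### Auxiliary computable permutation machinery -/

/-- All ways to insert `a` into the list `l`. -/
def capInserts {α : Type*} (a : α) : List α → List (List α)
  | [] => [[a]]
  | b :: l => (a :: b :: l) :: (capInserts a l).map (b :: ·)

/-- All permutations of `l`, by structural recursion (kernel-reducible). -/
def capPerms {α : Type*} : List α → List (List α)
  | [] => [[]]
  | a :: l => (capPerms l).flatMap (capInserts a)

lemma perm_of_mem_capInserts {α : Type*} {a : α} :
    ∀ {l l' : List α}, l' ∈ capInserts a l → l'.Perm (a :: l)
  | [], l', h => by simp [capInserts] at h; simp [h]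
  | b :: l, l', h => by
    simp only [capInserts, List.mem_cons, List.mem_map] at h
    rcases h with rfl | ⟨t, ht, rfl⟩
    · exact List.Perm.refl _
    · exact ((perm_of_mem_capInserts ht).cons b).trans (List.Perm.swap _ _ _)

lemma mem_capInserts_append {α : Type*} (a : α) :
    ∀ (l₁ l₂ : List α), l₁ ++ a :: l₂ ∈ capInserts a (l₁ ++ l₂)
  | [], l₂ => by cases l₂ <;> simp [capInserts]
  | b :: l₁, l₂ => by
    simp only [List.cons_append, capInserts, List.mem_cons, List.mem_map]
    exact Or.inr ⟨l₁ ++ a :: l₂, mem_capInserts_append a l₁ l₂, rfl⟩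

lemma perm_of_mem_capPerms {α : Type*} :
    ∀ {L l : List α}, l ∈ capPerms L → l.Perm L
  | [], l, h => by simp [capPerms] at h; simp [h]
  | a :: L, l, h => by
    simp only [capPerms, List.mem_flatMap] at h
    obtain ⟨t, ht, hl⟩ := h
    exact (perm_of_mem_capInserts hl).trans ((perm_of_mem_capPerms ht).cons a)

lemma mem_capPerms_of_perm {α : Type*} :
    ∀ {L l : List α}, l.Perm L → l ∈ capPerms L
  | [], l, h => by simp [capPerms, h.eq_nil]
  | a :: L, l, h => by
    have ha : a ∈ l := h.mem_iff.mpr List.mem_cons_self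
    obtain ⟨l₁, l₂, rfl⟩ := List.append_of_mem ha
    have h2 : (l₁ ++ l₂).Perm L := (List.perm_middle.symm.trans h).cons_inv
    simp only [capPerms, List.mem_flatMap]
    exact ⟨l₁ ++ l₂, mem_capPerms_of_perm h2, mem_capInserts_append a l₁ l₂⟩

/-- The computable list of candidate arc multisets. -/
def capMsets : List (Multiset (Sym2 (Fin 6))) :=
  ((capPerms (List.finRange 6)).filter
      (fun l => ((List.finRange 6).zip l).all (fun p => p.1 != p.2))).map
    (fun l => ((((List.finRange 6).zip l).map (fun p => s(p.1, p.2))) : List (Sym2 (Fin 6))))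

lemma capMsets_card : capMsets.toFinset.card = 130 := by decide

lemma zip_finRange (l : List (Fin 6)) (h : l.length = 6) :
    (List.finRange 6).zip l
      = (List.finRange 6).map (fun i => (i, l.get ⟨i.val, by omega⟩)) := by
  apply List.ext_getElem
  · simp [h]
  · intro n h₁ h₂
    simp [List.getElem_zip, List.getElem_map, List.getElem_finRange, List.get_eq_getElem]

lemma univ_val_eq : (Finset.univ.val : Multiset (Fin 6)) = ↑(List.finRange 6) := rfl

lemma mem_capMsets_iff (m : Multiset (Sym2 (Fin 6))) :
    m ∈ capMsets ↔ ∃ σ : Equiv.Perm (Fin 6), (∀ i, σ i ≠ i) ∧ m = arcMultiset σ := by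
  constructor
  · intro hm
    unfold capMsets at hm
    obtain ⟨l, hl, rfl⟩ := List.mem_map.mp hm
    obtain ⟨hlp, hfix⟩ := List.mem_filter.mp hl
    have hperm : l.Perm (List.finRange 6) := perm_of_mem_capPerms hlp
    have hlen : l.length = 6 := by simpa using hperm.length_eq
    have hnd : l.Nodup := hperm.nodup_iff.mpr (List.nodup_finRange 6)
    set f : Fin 6 → Fin 6 := fun i => l.get ⟨i.val, by omega⟩ with hf
    have hinj : Function.Injective f := by
      intro i j hij
      have := (List.nodup_iff_injective_get.mp hnd) hij
      exact Fin.ext (by simpa using congrArg Fin.val this)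
    have hzip := zip_finRange l hlen
    rw [List.all_eq_true] at hfix
    refine ⟨Equiv.ofBijective f (Finite.injective_iff_bijective.mp hinj), ?_, ?_⟩
    · intro i
      have hmem : (i, f i) ∈ (List.finRange 6).zip l := by
        rw [hzip]; exact List.mem_map.mpr ⟨i, List.mem_finRange i, rfl⟩
      have hne : i ≠ f i := bne_iff_ne.mp (hfix _ hmem)
      exact Ne.symm hne
    · rw [arcMultiset, univ_val_eq, hzip, ← Multiset.map_coe, ← Multiset.map_coe,
        Multiset.map_map]
      rfl
  · rintro ⟨σ, hσ, rfl⟩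
    unfold capMsets
    have hlen : ((List.finRange 6).map σ).length = 6 := by simp
    have hget : ∀ i : Fin 6, ((List.finRange 6).map σ).get ⟨i.val, by omega⟩ = σ i := by
      intro i
      simp [List.get_eq_getElem, List.getElem_map, List.getElem_finRange]
    have hzip := zip_finRange ((List.finRange 6).map σ) hlen
    refine List.mem_map.mpr ⟨(List.finRange 6).map σ, List.mem_filter.mpr ⟨?_, ?_⟩, ?_⟩
    · apply mem_capPerms_of_perm
      have h1 : ((List.finRange 6).map σ).Nodup :=
        (List.nodup_finRange 6).map σ.injective
      have h2 : (List.finRange 6).map σ ⊆ List.finRange 6 := by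
        intro x _; simp [List.mem_finRange]
      have h3 : List.finRange 6 ⊆ (List.finRange 6).map σ := by
        intro x _
        simpa using ⟨σ.symm x, by simp⟩
      exact (List.subperm_of_subset h1 h2).antisymm
        (List.subperm_of_subset (List.nodup_finRange 6) h3)
    · rw [List.all_eq_true]
      rintro ⟨i, x⟩ hmem
      rw [hzip] at hmem
      obtain ⟨j, _, hj⟩ := List.mem_map.mp hmem
      rw [Prod.mk.injEq] at hj
      obtain ⟨rfl, rfl⟩ := hj
      rw [hget]
      exact bne_iff_ne.mpr (Ne.symm (hσ _))
    · rw [arcMultiset, univ_val_eq, hzip, ← Multiset.map_coe, ← Multiset.map_coe,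
        Multiset.map_map]
      apply Multiset.map_congr rfl
      intro i _
      simp [hget i]

/-- The number of basic arc systems (pre-caps): the number of distinct multisets of
arcs `{arc[i, σ i] : i ∈ {1,…,6}}` over all fixed-point-free permutations `σ` of a
six-element set is 130. -/
theorem card_arc_multisets_eq_130 :
    Nat.card {m : Multiset (Sym2 (Fin 6)) |
      ∃ σ : Equiv.Perm (Fin 6), (∀ i, σ i ≠ i) ∧ m = arcMultiset σ} = 130 := by
  have hset : {m : Multiset (Sym2 (Fin 6)) |
      ∃ σ : Equiv.Perm (Fin 6), (∀ i, σ i ≠ i) ∧ m = arcMultiset σ}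
      = ↑capMsets.toFinset := by
    ext m
    simp [← mem_capMsets_iff m, List.mem_toFinset]
  rw [hset, Nat.card_coe_set_eq, Set.ncard_coe_finset]
  exact capMsets_card
end
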